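/- arXiv:2305.15118 — 10 statements merged into one kernel-verified Lean document; each statement's English description precedes it below -/
import Mathlib

section
/- Exchange property of matroid bases: In any matroid, for any two bases B₁ and B₂ and for any partition of B₁ into two disjoint parts X₁ and Y₁, there exists a partition of B₂ into two disjoint parts X₂ and Y₂ such that both X₁ ∪ Y₂ and X₂ ∪ Y₁ are bases of the matroid. -/
/-- A matroid on a finite ground set, given by its family of independent sets:
nonempty (contains `∅`), downward-closed, and satisfying the augmentation property. -/
structure FinMatroid (V : Type*) [DecidableEq V] where
  Indep : Finset V → Prop
  empty_indep : Indep ∅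
  subset_indep : ∀ ⦃A B : Finset V⦄, A ⊆ B → Indep B → Indep A
  augment : ∀ ⦃A B : Finset V⦄, Indep A → Indep B → A.card < B.card →
    ∃ e ∈ B, e ∉ A ∧ Indep (insert e A)

/-- A base is an inclusion-maximal independent set. -/
def FinMatroid.Base {V : Type*} [DecidableEq V] (M : FinMatroid V) (B : Finset V) : Prop :=
  M.Indep B ∧ ∀ ⦃B' : Finset V⦄, M.Indep B' → B ⊆ B' → B' = B

open Finset

open scoped Classical in
/-- rank of a set: max cardinality of an independent subset. -/
noncomputable def FinMatroid.rk {V : Type*} [DecidableEq V] (M : FinMatroid V)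
    (A : Finset V) : ℕ :=
  (A.powerset.filter fun I => M.Indep I).sup Finset.card

namespace FinMatroid

variable {V : Type*} [DecidableEq V] {M : FinMatroid V} {A B I : Finset V}

open scoped Classical

lemma card_le_rk (hI : M.Indep I) (hIA : I ⊆ A) : I.card ≤ M.rk A :=
  Finset.le_sup (by simp [mem_filter, mem_powerset, hI, hIA])

lemma exists_rk (M : FinMatroid V) (A : Finset V) :
    ∃ I, I ⊆ A ∧ M.Indep I ∧ I.card = M.rk A := by
  classical
  have hne : (A.powerset.filter fun I => M.Indep I).Nonempty :=
    ⟨∅, by simp [M.empty_indep]⟩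
  obtain ⟨I, hI, hEq⟩ := Finset.exists_mem_eq_sup _ hne Finset.card
  simp only [mem_filter, mem_powerset] at hI
  exact ⟨I, hI.1, hI.2, hEq.symm⟩

lemma rk_mono (h : A ⊆ B) : M.rk A ≤ M.rk B := by
  obtain ⟨I, hIA, hI, hc⟩ := M.exists_rk A
  rw [← hc]; exact card_le_rk hI (hIA.trans h)

lemma rk_le_card : M.rk A ≤ A.card := by
  obtain ⟨I, hIA, hI, hc⟩ := M.exists_rk A
  rw [← hc]; exact Finset.card_le_card hIA

lemma rk_of_indep (hI : M.Indep A) : M.rk A = A.card :=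
  le_antisymm rk_le_card (card_le_rk hI (le_refl _))

/-- any independent subset of `A` extends to one of full rank within `A`. -/
lemma exists_extend : ∀ (k : ℕ) (I : Finset V), M.rk A ≤ I.card + k →
    M.Indep I → I ⊆ A → ∃ J, I ⊆ J ∧ J ⊆ A ∧ M.Indep J ∧ J.card = M.rk A := by
  intro k
  induction k with
  | zero =>
    intro I hk hI hIA
    exact ⟨I, le_refl _, hIA, hI, le_antisymm (card_le_rk hI hIA) (by simpa using hk)⟩
  | succ k ih =>
    intro I hk hI hIA
    by_cases hle : M.rk A ≤ I.card
    · exact ⟨I, le_refl _, hIA, hI, le_antisymm (card_le_rk hI hIA) hle⟩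
    · push_neg at hle
      obtain ⟨K, hKA, hK, hKc⟩ := M.exists_rk A
      obtain ⟨e, heK, heI, hins⟩ := M.augment hI hK (by omega)
      have h1 : insert e I ⊆ A := by
        intro x hx; rcases Finset.mem_insert.1 hx with rfl | hx
        · exact hKA heK
        · exact hIA hx
      obtain ⟨J, hIJ, hJA, hJ, hJc⟩ := ih (insert e I)
        (by rw [Finset.card_insert_of_notMem heI]; omega) hins h1
      exact ⟨J, (Finset.subset_insert _ _).trans hIJ, hJA, hJ, hJc⟩

lemma rk_submod (M : FinMatroid V) (A B : Finset V) :
    M.rk (A ∪ B) + M.rk (A ∩ B) ≤ M.rk A + M.rk B := by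
  obtain ⟨I, hIA, hI, hIc⟩ := M.exists_rk (A ∩ B)
  obtain ⟨J, hIJ, hJU, hJ, hJc⟩ := exists_extend (A := A ∪ B) (M.rk (A ∪ B)) I (by omega) hI
    (hIA.trans Finset.inter_subset_union)
  have hJA : (J ∩ A).card ≤ M.rk A :=
    card_le_rk (M.subset_indep Finset.inter_subset_left hJ) Finset.inter_subset_right
  have hJB : (J ∩ B).card ≤ M.rk B :=
    card_le_rk (M.subset_indep Finset.inter_subset_left hJ) Finset.inter_subset_right
  have hint : (J ∩ (A ∩ B)).card = M.rk (A ∩ B) := by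
    have h1 : I ⊆ J ∩ (A ∩ B) := Finset.subset_inter hIJ hIA
    have h2 : (J ∩ (A ∩ B)).card ≤ M.rk (A ∩ B) :=
      card_le_rk (M.subset_indep Finset.inter_subset_left hJ) Finset.inter_subset_right
    have := Finset.card_le_card h1
    omega
  have hunion : J ∩ A ∪ J ∩ B = J := by
    rw [← Finset.inter_union_distrib_left]
    exact Finset.inter_eq_left.2 hJU
  have hinter : (J ∩ A) ∩ (J ∩ B) = J ∩ (A ∩ B) := by
    ext x; simp [Finset.mem_inter]; tauto
  have hcard := Finset.card_union_add_card_inter (J ∩ A) (J ∩ B)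
  rw [hunion, hinter] at hcard
  omega

/-- contraction of a matroid by an independent set. -/
def con (M : FinMatroid V) (C : Finset V) (hC : M.Indep C) : FinMatroid V where
  Indep A := Disjoint A C ∧ M.Indep (A ∪ C)
  empty_indep := ⟨Finset.disjoint_empty_left _, by simpa using hC⟩
  subset_indep := by
    intro A B hAB ⟨hd, hi⟩
    exact ⟨Finset.disjoint_of_subset_left hAB hd,
      M.subset_indep (Finset.union_subset_union_left hAB) hi⟩
  augment := by
    intro A B ⟨hdA, hiA⟩ ⟨hdB, hiB⟩ hcard
    have h1 : (A ∪ C).card < (B ∪ C).card := by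
      rw [Finset.card_union_of_disjoint hdA, Finset.card_union_of_disjoint hdB]
      omega
    obtain ⟨e, heB, heA, hins⟩ := M.augment hiA hiB h1
    have heC : e ∉ C := fun h => heA (Finset.mem_union_right _ h)
    refine ⟨e, ?_, fun h => heA (Finset.mem_union_left _ h), ?_, ?_⟩
    · rcases Finset.mem_union.1 heB with h | h
      · exact h
      · exact absurd h heC
    · exact Finset.disjoint_insert_left.2 ⟨heC, hdA⟩
    · rw [Finset.insert_union]; exact hins

lemma con_rk (M : FinMatroid V) (C : Finset V) (hC : M.Indep C) (A : Finset V) :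
    (M.con C hC).rk A + C.card = M.rk (A ∪ C) := by
  apply le_antisymm
  · obtain ⟨I, hIA, hI, hIc⟩ := (M.con C hC).exists_rk A
    obtain ⟨hd, hi⟩ := hI
    have := card_le_rk hi (Finset.union_subset_union_left hIA)
    rw [Finset.card_union_of_disjoint hd] at this
    omega
  · obtain ⟨J, hCJ, hJA, hJ, hJc⟩ := exists_extend (A := A ∪ C) (M.rk (A ∪ C)) C (by omega) hC
      Finset.subset_union_right
    have h1 : (M.con C hC).Indep (J \ C) := by
      refine ⟨Finset.sdiff_disjoint, ?_⟩
      rw [Finset.sdiff_union_of_subset hCJ]; exact hJ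
    have h2 : J \ C ⊆ A := by
      intro x hx
      obtain ⟨hxJ, hxC⟩ := Finset.mem_sdiff.1 hx
      rcases Finset.mem_union.1 (hJA hxJ) with h | h
      · exact h
      · exact absurd h hxC
    have h3 := card_le_rk (M := M.con C hC) h1 h2
    have h4 : (J \ C).card = J.card - C.card := Finset.card_sdiff_of_subset hCJ
    have h5 := Finset.card_le_card hCJ
    omega

lemma indep_of_rk_pos (h : 0 < M.rk {e}) : M.Indep {e} := by
  obtain ⟨I, hIA, hI, hc⟩ := M.exists_rk {e}
  have : I = {e} := by
    rcases Finset.subset_singleton_iff.1 hIA with rfl | rfl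
    · simp at hc; omega
    · rfl
  rwa [← this]

lemma rk_insert_of_loop (h : ¬ M.Indep {e}) (A : Finset V) :
    M.rk (insert e A) = M.rk A := by
  apply le_antisymm
  · obtain ⟨I, hIA, hI, hc⟩ := M.exists_rk (insert e A)
    have heI : e ∉ I := fun heI =>
      h (M.subset_indep (Finset.singleton_subset_iff.2 heI) hI)
    have : I ⊆ A := fun x hx => by
      rcases Finset.mem_insert.1 (hIA hx) with rfl | h'
      · exact absurd hx heI
      · exact h'
    rw [← hc]; exact card_le_rk hI this
  · exact rk_mono (Finset.subset_insert _ _)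

/-- Two-matroid partition theorem (special case: partition the whole set). -/
theorem partition : ∀ (E : Finset V) (M₁ M₂ : FinMatroid V),
    (∀ A ⊆ E, A.card ≤ M₁.rk A + M₂.rk A) →
    ∃ I₁ I₂, Disjoint I₁ I₂ ∧ I₁ ∪ I₂ = E ∧ M₁.Indep I₁ ∧ M₂.Indep I₂ := by
  intro E
  induction E using Finset.strongInduction with
  | _ E ih =>
    intro M₁ M₂ h
    rcases E.eq_empty_or_nonempty with rfl | ⟨e, heE⟩
    · exact ⟨∅, ∅, by simp, by simp, M₁.empty_indep, M₂.empty_indep⟩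
    -- helper facts
    have hE' : E.erase e ⊂ E := Finset.erase_ssubset heE
    have hone : M₁.Indep {e} ∨ M₂.Indep {e} := by
      have := h {e} (Finset.singleton_subset_iff.2 heE)
      simp only [Finset.card_singleton] at this
      rcases Nat.lt_or_ge 0 (M₁.rk {e}) with h1 | h1
      · exact Or.inl (indep_of_rk_pos h1)
      · exact Or.inr (indep_of_rk_pos (by omega))
    -- recursion attempt for M₁ (e goes into I₁)
    have tryA : ∀ (N₁ N₂ : FinMatroid V), (hN : N₁.Indep {e}) →
        (∀ A ⊆ E.erase e, A.card ≤ (N₁.con {e} hN).rk A + N₂.rk A) →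
        ∃ I₁ I₂, Disjoint I₁ I₂ ∧ I₁ ∪ I₂ = E ∧ N₁.Indep I₁ ∧ N₂.Indep I₂ := by
      intro N₁ N₂ hN hcond
      obtain ⟨I₁, I₂, hd, hu, hi₁, hi₂⟩ := ih _ hE' (N₁.con {e} hN) N₂ hcond
      obtain ⟨hd₁, hii₁⟩ := hi₁
      have heI₂ : e ∉ I₂ := fun hx => by
        have : e ∈ E.erase e := hu ▸ Finset.mem_union_right _ hx
        simp at this
      have heI₁ : e ∉ I₁ := Finset.disjoint_singleton_right.1 hd₁
      refine ⟨insert e I₁, I₂, ?_, ?_, ?_, hi₂⟩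
      · rw [Finset.disjoint_insert_left]; exact ⟨heI₂, hd⟩
      · rw [Finset.insert_union, hu, Finset.insert_erase heE]
      · have huc : I₁ ∪ {e} = insert e I₁ := by ext x; simp [or_comm]
        rwa [huc] at hii₁
    -- extraction of a tight set when recursion fails
    have getTight : ∀ (N₁ N₂ : FinMatroid V) (hN : N₁.Indep {e}),
        ¬ (∀ A ⊆ E.erase e, A.card ≤ (N₁.con {e} hN).rk A + N₂.rk A) →
        ∃ A ⊆ E.erase e, N₁.rk (insert e A) + N₂.rk A ≤ A.card := by
      intro N₁ N₂ hN hfail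
      push_neg at hfail
      obtain ⟨A, hAE, hA⟩ := hfail
      refine ⟨A, hAE, ?_⟩
      have := N₁.con_rk {e} hN A
      have he' : A ∪ {e} = insert e A := by ext x; simp [or_comm]
      rw [he'] at this
      simp only [Finset.card_singleton] at this
      omega
    have hswap : ∀ A ⊆ E, A.card ≤ M₂.rk A + M₁.rk A := fun A hA => by
      rw [Nat.add_comm]; exact h A hA
    -- contradiction when e is a loop in N₂ but a tight set exists for N₁
    have loopContra : ∀ (N₁ N₂ : FinMatroid V),
        (∀ A ⊆ E, A.card ≤ N₁.rk A + N₂.rk A) → ¬ N₂.Indep {e} →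
        ∀ A₁ ⊆ E.erase e, N₁.rk (insert e A₁) + N₂.rk A₁ ≤ A₁.card → False := by
      intro N₁ N₂ hh hloop A₁ hA₁E hA₁
      have heA₁ : e ∉ A₁ := fun hx => (Finset.mem_erase.1 (hA₁E hx)).1 rfl
      have hrk := rk_insert_of_loop hloop A₁
      have hsub : insert e A₁ ⊆ E := by
        intro x hx
        rcases Finset.mem_insert.1 hx with rfl | hx
        · exact heE
        · exact Finset.mem_of_mem_erase (hA₁E hx)
      have := hh _ hsub
      rw [Finset.card_insert_of_notMem heA₁] at this
      omega
    -- contradiction when tight sets exist on both sides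
    have submodContra : ∀ (N₁ N₂ : FinMatroid V),
        (∀ A ⊆ E, A.card ≤ N₁.rk A + N₂.rk A) →
        ∀ A₁ ⊆ E.erase e, N₁.rk (insert e A₁) + N₂.rk A₁ ≤ A₁.card →
        ∀ A₂ ⊆ E.erase e, N₂.rk (insert e A₂) + N₁.rk A₂ ≤ A₂.card → False := by
      intro N₁ N₂ hh A₁ hA₁E hA₁ A₂ hA₂E hA₂
      have heA₁ : e ∉ A₁ := fun hx => (Finset.mem_erase.1 (hA₁E hx)).1 rfl
      have heA₂ : e ∉ A₂ := fun hx => (Finset.mem_erase.1 (hA₂E hx)).1 rfl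
      have s₁ := N₁.rk_submod (insert e A₁) A₂
      have s₂ := N₂.rk_submod (insert e A₂) A₁
      have hu₁ : insert e A₁ ∪ A₂ = insert e (A₁ ∪ A₂) := by
        rw [Finset.insert_union]
      have hu₂ : insert e A₂ ∪ A₁ = insert e (A₁ ∪ A₂) := by
        rw [Finset.insert_union, Finset.union_comm]
      have hi₁' : insert e A₁ ∩ A₂ = A₁ ∩ A₂ := by
        ext x; simp only [Finset.mem_inter, Finset.mem_insert]
        constructor
        · rintro ⟨rfl | hx, hx2⟩
          · exact absurd hx2 heA₂
          · exact ⟨hx, hx2⟩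
        · tauto
      have hi₂' : insert e A₂ ∩ A₁ = A₁ ∩ A₂ := by
        ext x; simp only [Finset.mem_inter, Finset.mem_insert]
        constructor
        · rintro ⟨rfl | hx, hx2⟩
          · exact absurd hx2 heA₁
          · exact ⟨hx2, hx⟩
        · tauto
      rw [hu₁, hi₁'] at s₁
      rw [hu₂, hi₂'] at s₂
      have hUE : insert e (A₁ ∪ A₂) ⊆ E := by
        intro x hx
        rcases Finset.mem_insert.1 hx with rfl | hx
        · exact heE
        · rcases Finset.mem_union.1 hx with hx | hx
          · exact Finset.mem_of_mem_erase (hA₁E hx)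
          · exact Finset.mem_of_mem_erase (hA₂E hx)
      have hNE : A₁ ∩ A₂ ⊆ E := fun x hx =>
        Finset.mem_of_mem_erase (hA₁E (Finset.mem_inter.1 hx).1)
      have hU := hh _ hUE
      have hN := hh _ hNE
      have hcu : (insert e (A₁ ∪ A₂)).card = (A₁ ∪ A₂).card + 1 :=
        Finset.card_insert_of_notMem (fun hx => by
          rcases Finset.mem_union.1 hx with hx | hx
          · exact heA₁ hx
          · exact heA₂ hx)
      have hie := Finset.card_union_add_card_inter A₁ A₂
      omega
    by_cases h1 : M₁.Indep {e}
    · by_cases hc1 : ∀ A ⊆ E.erase e, A.card ≤ (M₁.con {e} h1).rk A + M₂.rk A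
      · exact tryA M₁ M₂ h1 hc1
      obtain ⟨A₁, hA₁E, hA₁⟩ := getTight M₁ M₂ h1 hc1
      by_cases h2 : M₂.Indep {e}
      · by_cases hc2 : ∀ A ⊆ E.erase e, A.card ≤ (M₂.con {e} h2).rk A + M₁.rk A
        · obtain ⟨I₂, I₁, hd, hu, hi₂, hi₁⟩ := tryA M₂ M₁ h2 hc2
          exact ⟨I₁, I₂, hd.symm, by rwa [Finset.union_comm], hi₁, hi₂⟩
        obtain ⟨A₂, hA₂E, hA₂⟩ := getTight M₂ M₁ h2 hc2
        exact absurd (submodContra M₁ M₂ h A₁ hA₁E hA₁ A₂ hA₂E hA₂) not_false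
      · exact absurd (loopContra M₁ M₂ h h2 A₁ hA₁E hA₁) not_false
    · have h2 : M₂.Indep {e} := hone.resolve_left h1
      by_cases hc2 : ∀ A ⊆ E.erase e, A.card ≤ (M₂.con {e} h2).rk A + M₁.rk A
      · obtain ⟨I₂, I₁, hd, hu, hi₂, hi₁⟩ := tryA M₂ M₁ h2 hc2
        exact ⟨I₁, I₂, hd.symm, by rwa [Finset.union_comm], hi₁, hi₂⟩
      obtain ⟨A₂, hA₂E, hA₂⟩ := getTight M₂ M₁ h2 hc2
      exact absurd (loopContra M₂ M₁ hswap h1 A₂ hA₂E hA₂) not_false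

lemma indep_card_le_base {B : Finset V} (hB : M.Base B) (hI : M.Indep I) :
    I.card ≤ B.card := by
  by_contra h
  push_neg at h
  obtain ⟨e, heI, heB, hins⟩ := M.augment hB.1 hI h
  have := hB.2 hins (Finset.subset_insert _ _)
  exact heB (this ▸ Finset.mem_insert_self e B)

lemma base_of_indep_card {B : Finset V} (hB : M.Base B) (hI : M.Indep I)
    (hc : B.card ≤ I.card) : M.Base I := by
  refine ⟨hI, fun B' hB' hIB' => ?_⟩
  have h1 : B'.card ≤ B.card := indep_card_le_base hB hB'
  exact (Finset.eq_of_subset_of_card_le hIB' (by omega)).symm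

end FinMatroid

set_option maxHeartbeats 1000000 in
/-- Exchange property of matroid bases: for any two bases `B₁`, `B₂` and any partition of `B₁`
into disjoint parts `X₁`, `Y₁`, there is a partition of `B₂` into disjoint parts `X₂`, `Y₂`
such that both `X₁ ∪ Y₂` and `X₂ ∪ Y₁` are bases. -/
theorem base_partition_exchange {V : Type*} [DecidableEq V] [Fintype V]
    (M : FinMatroid V) (B₁ B₂ X₁ Y₁ : Finset V)
    (hB₁ : M.Base B₁) (hB₂ : M.Base B₂)
    (hdisj : Disjoint X₁ Y₁) (hpart : X₁ ∪ Y₁ = B₁) :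
    ∃ X₂ Y₂ : Finset V, Disjoint X₂ Y₂ ∧ X₂ ∪ Y₂ = B₂ ∧
      M.Base (X₁ ∪ Y₂) ∧ M.Base (X₂ ∪ Y₁) := by
  have hX₁ : X₁ ⊆ B₁ := hpart ▸ Finset.subset_union_left
  have hY₁ : Y₁ ⊆ B₁ := hpart ▸ Finset.subset_union_right
  have hX₁i : M.Indep X₁ := M.subset_indep hX₁ hB₁.1
  have hY₁i : M.Indep Y₁ := M.subset_indep hY₁ hB₁.1
  have hcardB₂ : B₂.card = B₁.card :=
    le_antisymm (FinMatroid.indep_card_le_base hB₁ hB₂.1)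
      (FinMatroid.indep_card_le_base hB₂ hB₁.1)
  have hXY : X₁.card + Y₁.card = B₁.card := by
    rw [← hpart, Finset.card_union_of_disjoint hdisj]
  have cond : ∀ A ⊆ B₂, A.card ≤ (M.con X₁ hX₁i).rk A + (M.con Y₁ hY₁i).rk A := by
    intro A hA
    have hAi : M.Indep A := M.subset_indep hA hB₂.1
    have e₁ := M.con_rk X₁ hX₁i A
    have e₂ := M.con_rk Y₁ hY₁i A
    have hsub := M.rk_submod (A ∪ X₁) (A ∪ Y₁)
    have hU : (A ∪ X₁) ∪ (A ∪ Y₁) = A ∪ B₁ := by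
      rw [← hpart]; ext x
      simp only [Finset.mem_union]; tauto
    have hI : (A ∪ X₁) ∩ (A ∪ Y₁) = A := by
      ext x
      simp only [Finset.mem_inter, Finset.mem_union]
      constructor
      · rintro ⟨hx | hx, hy | hy⟩
        · exact hx
        · exact hx
        · exact hy
        · exact absurd hy (Finset.disjoint_left.1 hdisj hx)
      · tauto
    rw [hU, hI] at hsub
    have hrkA : M.rk A = A.card := FinMatroid.rk_of_indep hAi
    have hrkU : M.rk (A ∪ B₁) = B₁.card := by
      apply le_antisymm
      · obtain ⟨J, hJA, hJ, hJc⟩ := M.exists_rk (A ∪ B₁)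
        rw [← hJc]
        exact FinMatroid.indep_card_le_base hB₁ hJ
      · rw [← FinMatroid.rk_of_indep hB₁.1]
        exact FinMatroid.rk_mono Finset.subset_union_right
    omega
  obtain ⟨I₁, I₂, hd, hu, hi₁, hi₂⟩ := FinMatroid.partition B₂ _ _ cond
  obtain ⟨hd₁, hii₁⟩ := hi₁
  obtain ⟨hd₂, hii₂⟩ := hi₂
  have hc₁ : I₁.card + X₁.card ≤ B₁.card := by
    have := FinMatroid.indep_card_le_base hB₁ hii₁
    rwa [Finset.card_union_of_disjoint hd₁] at this
  have hc₂ : I₂.card + Y₁.card ≤ B₁.card := by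
    have := FinMatroid.indep_card_le_base hB₁ hii₂
    rwa [Finset.card_union_of_disjoint hd₂] at this
  have hsum : I₁.card + I₂.card = B₂.card := by
    rw [← hu, Finset.card_union_of_disjoint hd]
  refine ⟨I₂, I₁, hd.symm, by rw [Finset.union_comm]; exact hu, ?_, ?_⟩
  · refine FinMatroid.base_of_indep_card hB₁ (by rwa [Finset.union_comm]) ?_
    rw [Finset.union_comm, Finset.card_union_of_disjoint hd₁]
    omega
  · exact FinMatroid.base_of_indep_card hB₁ hii₂
      (by rw [Finset.card_union_of_disjoint hd₂]; omega)
end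

section
/- Exchange property for independent sets: In any matroid, for any two independent sets A and B and for any partition of A into two disjoint parts X₁ and Y₁, there exists a partition of B into two disjoint parts X₂ and Y₂ such that both X₁ ∪ Y₂ and X₂ ∪ Y₁ are independent. -/
namespace FinMatroid

open Finset

variable {V : Type*} [DecidableEq V] (M : FinMatroid V)

open Classical in
noncomputable def rk_s1 (S : Finset V) : ℕ :=
  {T ∈ S.powerset | M.Indep T}.sup card

theorem card_le_rk_s1 {S K : Finset V} (hKS : K ⊆ S) (hK : M.Indep K) : #K ≤ M.rk_s1 S :=
  le_sup (f := card) (by simp [hKS, hK])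

theorem exists_indep_card_eq_rk (S : Finset V) : ∃ J ⊆ S, M.Indep J ∧ #J = M.rk_s1 S := by
  classical
  obtain ⟨J, hJ, hsup⟩ :=
    exists_mem_eq_sup {T ∈ S.powerset | M.Indep T} ⟨∅, by simp [M.empty_indep]⟩ card
  simp only [mem_filter, mem_powerset] at hJ
  exact ⟨J, hJ.1, hJ.2, hsup.symm⟩

theorem rk_le_card_s1 (S : Finset V) : M.rk_s1 S ≤ #S := by
  obtain ⟨J, hJS, -, hJ⟩ := M.exists_indep_card_eq_rk S
  exact hJ ▸ card_le_card hJS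

theorem rk_singleton_of_not_indep {e : V} (he : ¬ M.Indep {e}) : M.rk_s1 {e} = 0 := by
  obtain ⟨J, hJ, hJi, hc⟩ := M.exists_indep_card_eq_rk {e}
  rcases subset_singleton_iff.mp hJ with rfl | rfl
  · simpa using hc.symm
  · exact absurd hJi he

theorem exists_superset_indep_card_eq_rk {I S : Finset V} (hIS : I ⊆ S) (hI : M.Indep I) :
    ∃ J, I ⊆ J ∧ J ⊆ S ∧ M.Indep J ∧ #J = M.rk_s1 S := by
  classical
  obtain ⟨J, hJmem, hJmax⟩ := exists_max_image {T ∈ S.powerset | M.Indep T ∧ I ⊆ T} card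
    ⟨I, by simp [hIS, hI]⟩
  simp only [mem_filter, mem_powerset] at hJmem hJmax
  obtain ⟨hJS, hJ, hIJ⟩ := hJmem
  refine ⟨J, hIJ, hJS, hJ, (M.card_le_rk_s1 hJS hJ).antisymm (not_lt.mp fun hlt => ?_)⟩
  obtain ⟨K, hKS, hK, hKc⟩ := M.exists_indep_card_eq_rk S
  obtain ⟨e, heK, heJ, hins⟩ := M.augment hJ hK (hKc ▸ hlt)
  have := hJmax _ ⟨insert_subset (hKS heK) hJS, hins, hIJ.trans (subset_insert _ _)⟩
  simp [card_insert_of_notMem heJ] at this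

theorem rk_union_add_rk_inter_le (S T : Finset V) :
    M.rk_s1 (S ∪ T) + M.rk_s1 (S ∩ T) ≤ M.rk_s1 S + M.rk_s1 T := by
  obtain ⟨I, hIST, hI, hIc⟩ := M.exists_indep_card_eq_rk (S ∩ T)
  obtain ⟨J, hIJ, hJST, hJ, hJc⟩ :=
    M.exists_superset_indep_card_eq_rk (hIST.trans (inter_subset_left.trans subset_union_left)) hI
  have hS : #(J ∩ S) ≤ M.rk_s1 S :=
    M.card_le_rk_s1 inter_subset_right (M.subset_indep inter_subset_left hJ)
  have hT : #(J ∩ T) ≤ M.rk_s1 T :=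
    M.card_le_rk_s1 inter_subset_right (M.subset_indep inter_subset_left hJ)
  have hunion : J ∩ S ∪ J ∩ T = J := by rw [← inter_union_distrib_left, inter_eq_left.mpr hJST]
  have hinter : J ∩ S ∩ (J ∩ T) = J ∩ (S ∩ T) := by rw [inter_inter_inter_comm, inter_self]
  have hcard := card_union_add_card_inter (J ∩ S) (J ∩ T)
  rw [hunion, hinter] at hcard
  have := card_le_card (subset_inter hIJ hIST)
  omega

/-- The contraction `M ／ P`; unlike `Matroid.contract`, it keeps `P` in the ground set, where its
elements act as loops. -/
def contract (P : Finset V) (hP : M.Indep P) : FinMatroid V where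
  Indep S := M.Indep (P ∪ S)
  empty_indep := by simpa using hP
  subset_indep _ _ hST hT := M.subset_indep (union_subset_union_right hST) hT
  augment S T hS hT hlt := by
    by_cases hTP : ∃ e ∈ T ∩ P, e ∉ S
    · obtain ⟨e, heTP, heS⟩ := hTP
      rw [mem_inter] at heTP
      refine ⟨e, heTP.1, heS, ?_⟩
      rwa [union_insert, insert_eq_of_mem (mem_union_left _ heTP.2)]
    · push Not at hTP
      have hTPS : T ∩ P ⊆ S ∩ P := fun x hx => mem_inter.mpr ⟨hTP x hx, (mem_inter.mp hx).2⟩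
      have hcard : #(P ∪ S) < #(P ∪ T) := by
        have hS := card_union_add_card_inter P S
        have hT := card_union_add_card_inter P T
        rw [inter_comm] at hS hT
        have := card_le_card hTPS
        omega
      obtain ⟨e, heT, heS, hins⟩ := M.augment hS hT hcard
      rw [mem_union, not_or] at heS
      refine ⟨e, (mem_union.mp heT).resolve_left heS.1, heS.2, ?_⟩
      rwa [← union_insert] at hins

theorem rk_union_le_rk_contract_add_card {P : Finset V} (hP : M.Indep P) (S : Finset V) :
    M.rk_s1 (P ∪ S) ≤ (M.contract P hP).rk_s1 S + #P := by
  obtain ⟨J, hPJ, hJPS, hJ, hJc⟩ :=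
    M.exists_superset_indep_card_eq_rk (S := P ∪ S) subset_union_left hP
  have hJP : (M.contract P hP).Indep (J \ P) := by
    change M.Indep (P ∪ J \ P)
    rwa [union_sdiff_of_subset hPJ]
  have := (M.contract P hP).card_le_rk_s1 (sdiff_le_iff.mpr hJPS) hJP
  rw [card_sdiff_of_subset hPJ] at this
  omega

theorem card_le_rk_contract_add_rk_contract {X Y S : Finset V} (hX : M.Indep X) (hY : M.Indep Y)
    (hXY : M.Indep (X ∪ Y)) (hdisj : Disjoint X Y) (hS : M.Indep S) :
    #S ≤ (M.contract X hX).rk_s1 S + (M.contract Y hY).rk_s1 S := by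
  have hXYS : #(X ∪ Y) ≤ M.rk_s1 (X ∪ S ∪ (Y ∪ S)) :=
    M.card_le_rk_s1 (union_subset_union subset_union_left subset_union_left) hXY
  have hSS : #S ≤ M.rk_s1 ((X ∪ S) ∩ (Y ∪ S)) :=
    M.card_le_rk_s1 (subset_inter subset_union_right subset_union_right) hS
  have hsubmod := M.rk_union_add_rk_inter_le (X ∪ S) (Y ∪ S)
  have hXS := M.rk_union_le_rk_contract_add_card hX S
  have hYS := M.rk_union_le_rk_contract_add_card hY S
  rw [card_union_of_disjoint hdisj] at hXYS
  omega

def Partitionable (M₁ M₂ : FinMatroid V) (E : Finset V) : Prop :=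
  ∃ I₁ I₂, Disjoint I₁ I₂ ∧ I₁ ∪ I₂ = E ∧ M₁.Indep I₁ ∧ M₂.Indep I₂

variable {M₁ M₂ : FinMatroid V}

theorem Partitionable.symm {E : Finset V} (h : Partitionable M₁ M₂ E) :
    Partitionable M₂ M₁ E := by
  obtain ⟨I₁, I₂, hd, hu, h₁, h₂⟩ := h
  exact ⟨I₂, I₁, hd.symm, union_comm I₁ I₂ ▸ hu, h₂, h₁⟩

theorem partitionable_insert_or_exists_rk_insert_add_rk_le {e : V} {E : Finset V} (he : e ∉ E)
    (ih : ∀ N : FinMatroid V, (∀ S ⊆ E, #S ≤ N.rk_s1 S + M₂.rk_s1 S) → Partitionable N M₂ E) :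
    Partitionable M₁ M₂ (insert e E) ∨ ∃ S ⊆ E, M₁.rk_s1 (insert e S) + M₂.rk_s1 S ≤ #S := by
  by_cases he₁ : M₁.Indep {e}
  swap
  · refine Or.inr ⟨∅, empty_subset _, ?_⟩
    simpa [M₁.rk_singleton_of_not_indep he₁] using M₂.rk_le_card_s1 ∅
  by_cases hcond : ∀ S ⊆ E, #S ≤ (M₁.contract {e} he₁).rk_s1 S + M₂.rk_s1 S
  · obtain ⟨I₁, I₂, hd, hu, h₁, h₂⟩ := ih _ hcond
    have heI₂ : e ∉ I₂ := fun h => he (hu ▸ mem_union_right _ h)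
    exact Or.inl ⟨insert e I₁, I₂, disjoint_insert_left.mpr ⟨heI₂, hd⟩,
      by rw [insert_union, hu], by rwa [insert_eq], h₂⟩
  · push Not at hcond
    obtain ⟨S, hSE, hlt⟩ := hcond
    have := M₁.rk_union_le_rk_contract_add_card he₁ S
    rw [← insert_eq, card_singleton] at this
    exact Or.inr ⟨S, hSE, by omega⟩

/-- The matroid partition theorem for two matroids (Edmonds). -/
theorem partitionable_of_card_le_rk_add_rk {E : Finset V}
    (h : ∀ S ⊆ E, #S ≤ M₁.rk_s1 S + M₂.rk_s1 S) : Partitionable M₁ M₂ E := by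
  induction E using Finset.induction_on generalizing M₁ M₂ with
  | empty => exact ⟨∅, ∅, disjoint_empty_left _, union_empty _, M₁.empty_indep, M₂.empty_indep⟩
  | @insert e E he ih =>
    rcases partitionable_insert_or_exists_rk_insert_add_rk_le he fun N hN => ih hN with
      hpart | ⟨S₁, hS₁, hcrit₁⟩
    · exact hpart
    rcases partitionable_insert_or_exists_rk_insert_add_rk_le he
        fun N hN => (ih fun S hS => add_comm (N.rk_s1 S) _ ▸ hN S hS).symm with
      hpart | ⟨S₂, hS₂, hcrit₂⟩
    · exact hpart.symm
    exfalso
    have heS₁ : e ∉ S₁ := fun h => he (hS₁ h)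
    have heS₂ : e ∉ S₂ := fun h => he (hS₂ h)
    have hunion := h (insert e (S₁ ∪ S₂)) (insert_subset_insert e (union_subset hS₁ hS₂))
    have hinter := h (S₁ ∩ S₂) ((inter_subset_left.trans hS₁).trans (subset_insert e E))
    have hsub₁ := M₁.rk_union_add_rk_inter_le (insert e S₁) S₂
    rw [insert_union, insert_inter_of_notMem heS₂] at hsub₁
    have hsub₂ := M₂.rk_union_add_rk_inter_le S₁ (insert e S₂)
    rw [union_insert, inter_insert_of_notMem heS₁] at hsub₂
    rw [card_insert_of_notMem (by simp [heS₁, heS₂])] at hunion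
    have := card_union_add_card_inter S₁ S₂
    omega

end FinMatroid

open Finset in
theorem indep_partition_exchange_general {V : Type*} [DecidableEq V]
    (M : FinMatroid V) (A B X₁ Y₁ : Finset V)
    (hA : M.Indep A) (hB : M.Indep B)
    (hdisj : Disjoint X₁ Y₁) (hpart : X₁ ∪ Y₁ = A) :
    ∃ X₂ Y₂ : Finset V, Disjoint X₂ Y₂ ∧ X₂ ∪ Y₂ = B ∧
      M.Indep (X₁ ∪ Y₂) ∧ M.Indep (X₂ ∪ Y₁) := by
  have hX₁ : M.Indep X₁ := M.subset_indep (hpart ▸ subset_union_left) hA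
  have hY₁ : M.Indep Y₁ := M.subset_indep (hpart ▸ subset_union_right) hA
  obtain ⟨Y₂, X₂, hd, hu, hY₂, hX₂⟩ :=
    FinMatroid.partitionable_of_card_le_rk_add_rk (M₁ := M.contract X₁ hX₁)
      (M₂ := M.contract Y₁ hY₁) fun S hS =>
      M.card_le_rk_contract_add_rk_contract hX₁ hY₁ (hpart ▸ hA) hdisj (M.subset_indep hS hB)
  exact ⟨X₂, Y₂, hd.symm, union_comm X₂ Y₂ ▸ hu, hY₂, union_comm Y₁ X₂ ▸ hX₂⟩

/-- Exchange property for independent sets: for any two independent sets `A`, `B` and any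
partition of `A` into disjoint parts `X₁`, `Y₁`, there is a partition of `B` into disjoint
parts `X₂`, `Y₂` such that both `X₁ ∪ Y₂` and `X₂ ∪ Y₁` are independent. -/
theorem indep_partition_exchange {V : Type*} [DecidableEq V] [Fintype V]
    (M : FinMatroid V) (A B X₁ Y₁ : Finset V)
    (hA : M.Indep A) (hB : M.Indep B)
    (hdisj : Disjoint X₁ Y₁) (hpart : X₁ ∪ Y₁ = A) :
    ∃ X₂ Y₂ : Finset V, Disjoint X₂ Y₂ ∧ X₂ ∪ Y₂ = B ∧
      M.Indep (X₁ ∪ Y₂) ∧ M.Indep (X₂ ∪ Y₁) :=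
  indep_partition_exchange_general M A B X₁ Y₁ hA hB hdisj hpart
end

section
/- Let V be partitioned into color classes V₁, …, V_C, let a matroid be given on V, and let ℓ_c ≤ u_c be fairness bounds for each color c. For each color c, let I_c ⊆ V_c be any subset of V_c that is independent in the matroid and maximal (with respect to inclusion) among independent subsets of V_c. If the family 𝓕 of feasible sets is nonempty, then there exists a feasible set R with R ⊆ ⋃_c I_c. -/
/-- A set `S` is feasible if it is independent in the matroid and, for every color `c`,
the number of elements of `S` of color `c` lies between `ℓ c` and `u c`. -/
def Feasible {V : Type*} [DecidableEq V] {C : ℕ} [Fintype V]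
    (M : FinMatroid V) (color : V → Fin C) (ℓ u : Fin C → ℕ) (S : Finset V) : Prop :=
  M.Indep S ∧ ∀ c : Fin C,
    ℓ c ≤ (S.filter (fun x => color x = c)).card ∧
    (S.filter (fun x => color x = c)).card ≤ u c

/-- If each `I c` is an independent subset of color class `V_c` that is maximal among
independent subsets of `V_c`, and some feasible set exists, then there is a feasible set
contained in `⋃ c, I c`. -/
theorem feasible_set_in_union_of_maximal_indep {V : Type*} [DecidableEq V] [Fintype V]
    {C : ℕ} (M : FinMatroid V) (color : V → Fin C) (ℓ u : Fin C → ℕ)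
    (hlu : ∀ c, ℓ c ≤ u c)
    (I : Fin C → Finset V)
    (hIcol : ∀ c, ∀ x ∈ I c, color x = c)
    (hIindep : ∀ c, M.Indep (I c))
    (hImax : ∀ c, ∀ J : Finset V, M.Indep J → (∀ x ∈ J, color x = c) → I c ⊆ J → J = I c)
    (hfeas : ∃ S : Finset V, Feasible M color ℓ u S) :
    ∃ R : Finset V, Feasible M color ℓ u R ∧ R ⊆ Finset.univ.biUnion I := by
  classical
  obtain ⟨S₀, hS₀⟩ := hfeas
  set U := Finset.univ.biUnion I with hU
  suffices H : ∀ n : ℕ, ∀ S : Finset V, Feasible M color ℓ u S → (S \ U).card ≤ n →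
      ∃ R : Finset V, Feasible M color ℓ u R ∧ R ⊆ U by
    exact H (S₀ \ U).card S₀ hS₀ le_rfl
  intro n
  induction n with
  | zero =>
    intro S hS hcard
    refine ⟨S, hS, ?_⟩
    have : S \ U = ∅ := Finset.card_eq_zero.mp (Nat.le_zero.mp hcard)
    exact Finset.sdiff_eq_empty_iff_subset.mp this
  | succ n ih =>
    intro S hS hcard
    by_cases hsub : S ⊆ U
    · exact ⟨S, hS, hsub⟩
    · obtain ⟨x, hxSU⟩ : (S \ U).Nonempty := by
        rw [Finset.sdiff_nonempty]; exact hsub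
      have hxS : x ∈ S := (Finset.mem_sdiff.mp hxSU).1
      have hxU : x ∉ U := (Finset.mem_sdiff.mp hxSU).2
      set c := color x with hc
      have hIcU : I c ⊆ U := fun y hy => Finset.mem_biUnion.mpr ⟨c, Finset.mem_univ c, hy⟩
      have hxIc : x ∉ I c := fun h => hxU (hIcU h)
      have hSind : M.Indep S := hS.1
      -- insert x (I c) is dependent
      have hdep : ¬ M.Indep (insert x (I c)) := by
        intro hind
        have hcolJ : ∀ y ∈ insert x (I c), color y = c := by
          intro y hy
          rcases Finset.mem_insert.mp hy with h | h
          · rw [h]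
          · exact hIcol c y h
        have := hImax c (insert x (I c)) hind hcolJ (Finset.subset_insert _ _)
        exact hxIc (this ▸ Finset.mem_insert_self x (I c))
      set A := S.erase x with hA
      have hAS : A ⊆ S := Finset.erase_subset _ _
      have hAind : M.Indep A := M.subset_indep hAS hSind
      have hAcard : A.card = S.card - 1 := Finset.card_erase_of_mem hxS
      have hScard_pos : 1 ≤ S.card := Finset.card_pos.mpr ⟨x, hxS⟩
      set X := A ∪ I c with hX
      have hSinsX : S ⊆ insert x X := by
        intro y hy
        rcases eq_or_ne y x with h | h
        · rw [h]; exact Finset.mem_insert_self _ _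
        · exact Finset.mem_insert_of_mem (Finset.mem_union_left _ (Finset.mem_erase.mpr ⟨h, hy⟩))
      -- choose B of max card among independent subsets of X containing A
      obtain ⟨B, hBmem, hBmax⟩ := Finset.exists_max_image
        (X.powerset.filter fun B => A ⊆ B ∧ M.Indep B) Finset.card
        ⟨A, by
          rw [Finset.mem_filter, Finset.mem_powerset]
          exact ⟨Finset.subset_union_left, Finset.Subset.refl _, hAind⟩⟩
      rw [Finset.mem_filter, Finset.mem_powerset] at hBmem
      obtain ⟨hBX, hAB, hBind⟩ := hBmem
      have hBmax' : ∀ B' : Finset V, B' ⊆ X → A ⊆ B' → M.Indep B' → B'.card ≤ B.card := by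
        intro B' h1 h2 h3
        exact hBmax B' (by rw [Finset.mem_filter, Finset.mem_powerset]; exact ⟨h1, h2, h3⟩)
      -- key claim: B has at least |S| elements
      have hcardB : S.card ≤ B.card := by
        by_contra hlt
        push_neg at hlt
        -- extend I c to a max-card independent set K in insert x X
        obtain ⟨K, hKmem, hKmax⟩ := Finset.exists_max_image
          ((insert x X).powerset.filter fun K => I c ⊆ K ∧ M.Indep K) Finset.card
          ⟨I c, by
            rw [Finset.mem_filter, Finset.mem_powerset]
            exact ⟨(Finset.subset_union_right).trans (Finset.subset_insert _ _),
              Finset.Subset.refl _, hIindep c⟩⟩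
        rw [Finset.mem_filter, Finset.mem_powerset] at hKmem
        obtain ⟨hKX, hIcK, hKind⟩ := hKmem
        have hKmax' : ∀ K' : Finset V, K' ⊆ insert x X → I c ⊆ K' → M.Indep K' →
            K'.card ≤ K.card := by
          intro K' h1 h2 h3
          exact hKmax K' (by rw [Finset.mem_filter, Finset.mem_powerset]; exact ⟨h1, h2, h3⟩)
        have hKS : S.card ≤ K.card := by
          by_contra hKlt
          push_neg at hKlt
          obtain ⟨e, heS, heK, hind⟩ := M.augment hKind hSind hKlt
          have h1 : insert e K ⊆ insert x X :=
            Finset.insert_subset (hSinsX heS) hKX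
          have := hKmax' (insert e K) h1 (hIcK.trans (Finset.subset_insert _ _)) hind
          rw [Finset.card_insert_of_notMem heK] at this
          omega
        by_cases hxK : x ∈ K
        · exact hdep (M.subset_indep (Finset.insert_subset hxK hIcK) hKind)
        · have hKX' : K ⊆ X := by
            intro y hy
            rcases Finset.mem_insert.mp (hKX hy) with h | h
            · exact absurd (h ▸ hy) hxK
            · exact h
          have hlt' : B.card < K.card := lt_of_lt_of_le hlt hKS
          obtain ⟨e, heK, heB, hind⟩ := M.augment hBind hKind hlt'
          have := hBmax' (insert e B) (Finset.insert_subset (hKX' heK) hBX)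
            (hAB.trans (Finset.subset_insert _ _)) hind
          rw [Finset.card_insert_of_notMem heB] at this
          omega
      -- augment A from B to get e ∈ I c \ S
      have hABlt : A.card < B.card := by omega
      obtain ⟨e, heB, heA, hind⟩ := M.augment hAind hBind hABlt
      have heIc : e ∈ I c := by
        rcases Finset.mem_union.mp (hBX heB) with h | h
        · exact absurd h heA
        · exact h
      have hecol : color e = c := hIcol c e heIc
      have hex : e ≠ x := fun h => hxIc (h ▸ heIc)
      have heS : e ∉ S := fun h => heA (Finset.mem_erase.mpr ⟨hex, h⟩)
      set S' := insert e A with hS'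
      -- color counts are preserved
      have hcount : ∀ d : Fin C,
          (S'.filter (fun y => color y = d)).card = (S.filter (fun y => color y = d)).card := by
        intro d
        by_cases hd : d = c
        · rw [hd]
          have hxf : x ∈ S.filter (fun y => color y = c) :=
            Finset.mem_filter.mpr ⟨hxS, hc.symm⟩
          have h1 : S'.filter (fun y => color y = c) =
              insert e (A.filter (fun y => color y = c)) := by
            rw [hS', Finset.filter_insert, if_pos hecol]
          have h2 : A.filter (fun y => color y = c) =
              (S.filter (fun y => color y = c)).erase x := by
            rw [hA, Finset.filter_erase]
          have h3 : e ∉ A.filter (fun y => color y = c) := fun h =>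
            heA (Finset.mem_filter.mp h).1
          have h4 : 1 ≤ (S.filter (fun y => color y = c)).card :=
            Finset.card_pos.mpr ⟨x, hxf⟩
          rw [h1, Finset.card_insert_of_notMem h3, h2, Finset.card_erase_of_mem hxf]
          omega
        · congr 1
          ext y
          simp only [Finset.mem_filter, hS', Finset.mem_insert, hA, Finset.mem_erase]
          constructor
          · rintro ⟨h | ⟨-, h⟩, hcol⟩
            · exact absurd (h ▸ hcol) (by rw [hecol]; exact fun hh => hd hh.symm)
            · exact ⟨h, hcol⟩
          · rintro ⟨h, hcol⟩
            refine ⟨Or.inr ⟨fun hyx => hd ?_, h⟩, hcol⟩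
            rw [hyx] at hcol
            exact (hc.trans hcol).symm
      have hS'feas : Feasible M color ℓ u S' := by
        refine ⟨hind, fun d => ?_⟩
        rw [hcount d]
        exact hS.2 d
      have hS'card : (S' \ U).card ≤ n := by
        have hsub' : S' \ U ⊆ (S \ U).erase x := by
          intro y hy
          obtain ⟨hyS', hyU⟩ := Finset.mem_sdiff.mp hy
          rcases Finset.mem_insert.mp hyS' with h | h
          · exact absurd (h ▸ hyU) (fun _ => (h ▸ hyU) (hIcU heIc))
          · obtain ⟨hyx, hyS⟩ := Finset.mem_erase.mp h
            exact Finset.mem_erase.mpr ⟨hyx, Finset.mem_sdiff.mpr ⟨hyS, hyU⟩⟩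
        have := Finset.card_le_card hsub'
        rw [Finset.card_erase_of_mem hxSU] at this
        omega
      exact ih S' hS'feas hS'card
end

section
/- Let a matroid be given on a finite ground set V, let V₁ ⊆ V, and let I₁ ⊆ V₁ be an independent subset of V₁ that is maximal (with respect to inclusion) among independent subsets of V₁. Let R be any independent set and let x ∈ (R ∩ V₁) \ I₁. Then there exists y ∈ I₁ \ R such that (R \ {x}) ∪ {y} is independent. -/
/-- Any independent subset of `X` extends to a maximal independent subset of `X`. -/
lemma FinMatroid.exists_maximal_superset {V : Type*} [DecidableEq V] [Fintype V]
    (M : FinMatroid V) (X S : Finset V) (hS : M.Indep S) (hSX : S ⊆ X) :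
    ∃ C, S ⊆ C ∧ C ⊆ X ∧ M.Indep C ∧
      ∀ J, M.Indep J → J ⊆ X → C ⊆ J → J = C := by
  classical
  set P := X.powerset.filter (fun J => M.Indep J ∧ S ⊆ J) with hP
  have hne : P.Nonempty := ⟨S, by simp [hP, hSX, hS]⟩
  obtain ⟨C, hC, hmax⟩ := P.exists_max_image Finset.card hne
  simp only [hP, Finset.mem_filter, Finset.mem_powerset] at hC
  refine ⟨C, hC.2.2, hC.1, hC.2.1, ?_⟩
  intro J hJ hJX hCJ
  have hJP : J ∈ P := by
    simp only [hP, Finset.mem_filter, Finset.mem_powerset]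
    exact ⟨hJX, hJ, hC.2.2.trans hCJ⟩
  exact (Finset.eq_of_subset_of_card_le hCJ (hmax J hJP)).symm

/-- If `I₁ ⊆ V₁` is independent and maximal among independent subsets of `V₁`, `R` is
independent, and `x ∈ (R ∩ V₁) \ I₁`, then there is `y ∈ I₁ \ R` such that
`(R \ {x}) ∪ {y}` is independent. -/
theorem exchange_with_maximal_indep_subset {V : Type*} [DecidableEq V] [Fintype V]
    (M : FinMatroid V) (V₁ I₁ R : Finset V) (x : V)
    (hI₁sub : I₁ ⊆ V₁) (hI₁indep : M.Indep I₁)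
    (hI₁max : ∀ J : Finset V, M.Indep J → J ⊆ V₁ → I₁ ⊆ J → J = I₁)
    (hR : M.Indep R) (hx : x ∈ (R ∩ V₁) \ I₁) :
    ∃ y ∈ I₁ \ R, M.Indep (insert y (R.erase x)) := by
  classical
  obtain ⟨hxRV, hxI⟩ := Finset.mem_sdiff.mp hx
  obtain ⟨hxR, hxV⟩ := Finset.mem_inter.mp hxRV
  set X := I₁ ∪ R with hX
  obtain ⟨C, hIC, hCX, hCind, hCmax⟩ :=
    M.exists_maximal_superset X I₁ hI₁indep Finset.subset_union_left
  have hxC : x ∉ C := by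
    intro hxC
    have h1 : insert x I₁ ⊆ C := Finset.insert_subset hxC hIC
    have h2 : M.Indep (insert x I₁) := M.subset_indep h1 hCind
    have h3 := hI₁max _ h2 (Finset.insert_subset hxV hI₁sub) (Finset.subset_insert _ _)
    exact hxI (h3 ▸ Finset.mem_insert_self x I₁)
  have hRX : R ⊆ X := Finset.subset_union_right
  have hcard : R.card ≤ C.card := by
    by_contra h
    push_neg at h
    obtain ⟨e, heR, heC, hins⟩ := M.augment hCind hR h
    have heq : insert e C = C :=
      hCmax _ hins (Finset.insert_subset (hRX heR) hCX) (Finset.subset_insert _ _)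
    exact heC (heq ▸ Finset.mem_insert_self e C)
  have hA : M.Indep (R.erase x) := M.subset_indep (Finset.erase_subset _ _) hR
  have hAcard : (R.erase x).card < C.card := by
    have h1 := Finset.card_erase_of_mem hxR
    have h2 := Finset.card_pos.mpr ⟨x, hxR⟩
    omega
  obtain ⟨y, hyC, hyA, hins⟩ := M.augment hA hCind hAcard
  have hyx : y ≠ x := fun he => hxC (he ▸ hyC)
  have hyR : y ∉ R := fun hyR => hyA (Finset.mem_erase.mpr ⟨hyx, hyR⟩)
  have hyI : y ∈ I₁ := by
    rcases Finset.mem_union.mp (hCX hyC) with h | h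
    · exact h
    · exact absurd h hyR
  exact ⟨y, Finset.mem_sdiff.mpr ⟨hyI, hyR⟩, hins⟩
end

section
/- Let P and Q be finite sets with |P| = |Q| = n, and let X, X'' ⊆ P × Q be sets of edges of a bipartite graph on parts P and Q such that: every q ∈ Q is the second coordinate of exactly one edge of X and every p ∈ P is the first coordinate of at most two edges of X; and every p ∈ P is the first coordinate of exactly one edge of X'' and every q ∈ Q is the second coordinate of at most two edges of X''. Then the bipartite graph with edge set X ∪ X'' contains a matching of size at least (2/3)·n. -/
/-- A matching in a bipartite graph with edge set a subset of `α × β`: no two distinct edges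
share a first coordinate or a second coordinate. -/
def IsMatching {α β : Type*} (M : Finset (α × β)) : Prop :=
  (∀ e ∈ M, ∀ e' ∈ M, e.1 = e'.1 → e = e') ∧
  (∀ e ∈ M, ∀ e' ∈ M, e.2 = e'.2 → e = e')

lemma card_le_two_mul_image {α β : Type*} [DecidableEq β] (s : Finset α) (g : α → β)
    (h : ∀ b, (s.filter (fun a => g a = b)).card ≤ 2) :
    s.card ≤ 2 * (s.image g).card := by
  calc s.card = ∑ b ∈ s.image g, (s.filter (fun a => g a = b)).card :=
      Finset.card_eq_sum_card_fiberwise (fun a ha => Finset.mem_image_of_mem g ha)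
    _ ≤ ∑ _b ∈ s.image g, 2 := Finset.sum_le_sum (fun b _ => h b)
    _ = 2 * (s.image g).card := by rw [Finset.sum_const, smul_eq_mul, mul_comm]

/-- If every `q ∈ Q` has exactly one `X`-edge and every `p ∈ P` has at most two `X`-edges,
every `p ∈ P` has exactly one `X''`-edge and every `q ∈ Q` has at most two `X''`-edges,
then `X ∪ X''` contains a matching of size at least `(2/3)·n`, where `|P| = |Q| = n`. -/
theorem matching_two_thirds {P Q : Type*} [Fintype P] [Fintype Q]
    [DecidableEq P] [DecidableEq Q]
    (n : ℕ) (hP : Fintype.card P = n) (hQ : Fintype.card Q = n)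
    (X X'' : Finset (P × Q))
    (hXq : ∀ q : Q, (X.filter (fun e => e.2 = q)).card = 1)
    (hXp : ∀ p : P, (X.filter (fun e => e.1 = p)).card ≤ 2)
    (hX''p : ∀ p : P, (X''.filter (fun e => e.1 = p)).card = 1)
    (hX''q : ∀ q : Q, (X''.filter (fun e => e.2 = q)).card ≤ 2) :
    ∃ M ⊆ X ∪ X'', IsMatching M ∧ (2 : ℝ) / 3 * n ≤ M.card := by
  classical
  -- the X-partner of each q
  obtain ⟨f, hf⟩ : ∃ f : Q → P, ∀ q, (f q, q) ∈ X := by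
    have h : ∀ q : Q, ∃ p, (p, q) ∈ X := by
      intro q
      obtain ⟨e, he⟩ := Finset.card_eq_one.mp (hXq q)
      have he' : e ∈ X.filter (fun e => e.2 = q) := he ▸ Finset.mem_singleton_self e
      obtain ⟨h1, h2⟩ := Finset.mem_filter.mp he'
      exact ⟨e.1, by rwa [← h2]⟩
    choose f hf using h
    exact ⟨f, hf⟩
  -- the X''-partner of each p
  obtain ⟨g, hg⟩ : ∃ g : P → Q, ∀ p, (p, g p) ∈ X'' := by
    have h : ∀ p : P, ∃ q, (p, q) ∈ X'' := by
      intro p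
      obtain ⟨e, he⟩ := Finset.card_eq_one.mp (hX''p p)
      have he' : e ∈ X''.filter (fun e => e.1 = p) := he ▸ Finset.mem_singleton_self e
      obtain ⟨h1, h2⟩ := Finset.mem_filter.mp he'
      exact ⟨e.2, by rwa [← h2]⟩
    choose g hg using h
    exact ⟨g, hg⟩
  -- fiber bounds
  have hgfib : ∀ (q : Q) (s : Finset P), (s.filter (fun p => g p = q)).card ≤ 2 := by
    intro q s
    refine le_trans (Finset.card_le_card_of_injOn (fun p => (p, q)) ?_ ?_) (hX''q q)
    · intro p hp
      obtain ⟨_, hp2⟩ := Finset.mem_filter.mp hp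
      exact Finset.mem_filter.mpr ⟨by rw [← hp2]; exact hg p, rfl⟩
    · intro p1 _ p2 _ h
      exact congrArg Prod.fst h
  have hffib : ∀ (p : P) (s : Finset Q), (s.filter (fun q => f q = p)).card ≤ 2 := by
    intro p s
    refine le_trans (Finset.card_le_card_of_injOn (fun q => (p, q)) ?_ ?_) (hXp p)
    · intro q hq
      obtain ⟨_, hq2⟩ := Finset.mem_filter.mp hq
      exact Finset.mem_filter.mpr ⟨by rw [← hq2]; exact hf q, rfl⟩
    · intro q1 _ q2 _ h
      exact congrArg Prod.snd h
  set d : ℕ := n / 3 with hd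
  set A : P → Finset (Q ⊕ Fin d) :=
    fun p => (((X ∪ X'').filter (fun e => e.1 = p)).image Prod.snd).image Sum.inl with hA
  set B : Finset (Q ⊕ Fin d) := Finset.univ.image Sum.inr with hB
  set t : P → Finset (Q ⊕ Fin d) := fun p => A p ∪ B with ht
  have hBcard : B.card = d := by
    rw [hB, Finset.card_image_of_injective _ Sum.inr_injective, Finset.card_univ,
      Fintype.card_fin]
  have hall : ∀ s : Finset P, s.card ≤ (s.biUnion t).card := by
    intro s
    rcases s.eq_empty_or_nonempty with rfl | hs
    · simp
    set NS : Finset Q :=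
      s.biUnion (fun p => ((X ∪ X'').filter (fun e => e.1 = p)).image Prod.snd) with hNS
    -- bound A : |S| ≤ 2 |N(S)|
    have himgg : s.image g ⊆ NS := by
      intro q hq
      obtain ⟨p, hp, rfl⟩ := Finset.mem_image.mp hq
      refine Finset.mem_biUnion.mpr ⟨p, hp, Finset.mem_image.mpr ⟨(p, g p), ?_, rfl⟩⟩
      exact Finset.mem_filter.mpr ⟨Finset.mem_union_right _ (hg p), rfl⟩
    have hbA : s.card ≤ 2 * NS.card :=
      le_trans (card_le_two_mul_image s g (fun q => hgfib q s))
        (by have := Finset.card_le_card himgg; omega)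
    -- bound B : 2|S| ≤ n + |N(S)|
    have hbB : 2 * s.card ≤ n + NS.card := by
      have himgf : NSᶜ.image f ⊆ sᶜ := by
        intro p hp
        obtain ⟨q, hq, rfl⟩ := Finset.mem_image.mp hp
        rw [Finset.mem_compl] at hq ⊢
        intro hfs
        refine hq (Finset.mem_biUnion.mpr ⟨f q, hfs, Finset.mem_image.mpr ⟨(f q, q), ?_, rfl⟩⟩)
        exact Finset.mem_filter.mpr ⟨Finset.mem_union_left _ (hf q), rfl⟩
      have h1 : NSᶜ.card ≤ 2 * (NSᶜ.image f).card :=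
        card_le_two_mul_image _ f (fun p => hffib p _)
      have h2 : (NSᶜ.image f).card ≤ sᶜ.card := Finset.card_le_card himgf
      have h3 : NSᶜ.card = n - NS.card := by rw [Finset.card_compl, hQ]
      have h4 : sᶜ.card = n - s.card := by rw [Finset.card_compl, hP]
      have h5 : NS.card ≤ n := by rw [← hQ]; exact Finset.card_le_univ NS
      have h6 : s.card ≤ n := by rw [← hP]; exact Finset.card_le_univ s
      omega
    -- deficiency bound
    have hdef : s.card ≤ NS.card + d := by omega
    -- biUnion contains NS.image inl ∪ B, disjointly
    have hsub : NS.image Sum.inl ∪ B ⊆ s.biUnion t := by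
      intro x hx
      rcases Finset.mem_union.mp hx with hx | hx
      · obtain ⟨q, hq, rfl⟩ := Finset.mem_image.mp hx
        obtain ⟨p, hp, hq'⟩ := Finset.mem_biUnion.mp hq
        exact Finset.mem_biUnion.mpr ⟨p, hp,
          Finset.mem_union_left _ (Finset.mem_image.mpr ⟨q, hq', rfl⟩)⟩
      · obtain ⟨p, hp⟩ := hs
        exact Finset.mem_biUnion.mpr ⟨p, hp, Finset.mem_union_right _ hx⟩
    have hdisj : Disjoint (NS.image Sum.inl) B := by
      rw [Finset.disjoint_left]
      rintro x hx hx'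
      obtain ⟨q, _, rfl⟩ := Finset.mem_image.mp hx
      obtain ⟨j, _, hj⟩ := Finset.mem_image.mp hx'
      exact Sum.inl_ne_inr hj.symm
    calc s.card ≤ NS.card + d := hdef
      _ = (NS.image Sum.inl ∪ B).card := by
          rw [Finset.card_union_of_disjoint hdisj,
            Finset.card_image_of_injective _ Sum.inl_injective, hBcard]
      _ ≤ (s.biUnion t).card := Finset.card_le_card hsub
  obtain ⟨F, hFinj, hFmem⟩ := (Finset.all_card_le_biUnion_card_iff_exists_injective t).mp hall
  set M : Finset (P × Q) := (X ∪ X'').filter (fun e => F e.1 = Sum.inl e.2) with hM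
  refine ⟨M, Finset.filter_subset _ _, ⟨?_, ?_⟩, ?_⟩
  · intro e he e' he' h1
    obtain ⟨_, h2⟩ := Finset.mem_filter.mp he
    obtain ⟨_, h2'⟩ := Finset.mem_filter.mp he'
    rw [h1] at h2
    rw [h2'] at h2
    exact Prod.ext h1 (Sum.inl_injective h2.symm)
  · intro e he e' he' h2
    obtain ⟨_, hF⟩ := Finset.mem_filter.mp he
    obtain ⟨_, hF'⟩ := Finset.mem_filter.mp he'
    have h1 : e.1 = e'.1 := hFinj (by rw [hF, hF', h2])
    exact Prod.ext h1 h2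
  · -- cardinality
    set K : Finset P := Finset.univ.filter (fun p => ∃ q, F p = Sum.inl q) with hK
    set Kc : Finset P := Finset.univ.filter (fun p => ¬ ∃ q, F p = Sum.inl q) with hKc'
    have hKc : Kc.card ≤ d := by
      refine le_trans (Finset.card_le_card_of_injOn
        (t := Finset.univ.image Sum.inr) F ?_ hFinj.injOn) ?_
      · intro p hp
        obtain ⟨_, hp2⟩ := Finset.mem_filter.mp hp
        rcases hFp : F p with q | j
        · exact absurd ⟨q, hFp⟩ hp2
        · exact Finset.mem_image.mpr ⟨j, Finset.mem_univ j, rfl⟩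
      · rw [Finset.card_image_of_injective _ Sum.inr_injective, Finset.card_univ,
          Fintype.card_fin]
    have hKcard : n - d ≤ K.card := by
      have hcover : (Finset.univ : Finset P) ⊆ K ∪ Kc := by
        intro p _
        by_cases h : ∃ q, F p = Sum.inl q
        · exact Finset.mem_union_left _ (Finset.mem_filter.mpr ⟨Finset.mem_univ p, h⟩)
        · exact Finset.mem_union_right _ (Finset.mem_filter.mpr ⟨Finset.mem_univ p, h⟩)
      have h1 : n ≤ (K ∪ Kc).card := by
        rw [← hP, ← Finset.card_univ]; exact Finset.card_le_card hcover
      have h2 : (K ∪ Kc).card ≤ K.card + Kc.card := Finset.card_union_le K Kc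
      omega
    have hKM : K ⊆ M.image Prod.fst := by
      intro p hp
      obtain ⟨_, q, hq⟩ := Finset.mem_filter.mp hp
      have hFt := hFmem p
      rw [hq] at hFt
      rcases Finset.mem_union.mp hFt with hx | hx
      · obtain ⟨q', hq', heq⟩ := Finset.mem_image.mp hx
        obtain ⟨e, he, he2⟩ := Finset.mem_image.mp hq'
        obtain ⟨heU, he1⟩ := Finset.mem_filter.mp he
        have hqq : q' = q := Sum.inl_injective heq
        have hepq : e = (p, q) := Prod.ext he1 (by rw [he2, hqq])
        rw [hepq] at heU
        refine Finset.mem_image.mpr ⟨(p, q), ?_, rfl⟩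
        exact Finset.mem_filter.mpr ⟨heU, by simpa using hq⟩
      · obtain ⟨j, _, hj⟩ := Finset.mem_image.mp hx
        exact (Sum.inr_ne_inl hj).elim
    have hMcard : n - d ≤ M.card := by
      have h1 : K.card ≤ (M.image Prod.fst).card := Finset.card_le_card hKM
      have h2 : (M.image Prod.fst).card ≤ M.card := Finset.card_image_le
      omega
    -- convert to reals
    have hdn : d * 3 ≤ n := by rw [hd]; exact Nat.div_mul_le_self n 3
    have hdle : d ≤ n := by omega
    have hcast : ((n - d : ℕ) : ℝ) ≤ (M.card : ℝ) := Nat.cast_le.mpr hMcard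
    rw [Nat.cast_sub hdle] at hcast
    have hd3 : ((d : ℝ)) * 3 ≤ (n : ℝ) := by exact_mod_cast hdn
    linarith
end

section
/- Let V be a finite set partitioned into color classes V₁, …, V_C with natural-number bounds ℓ_c ≤ u_c, and let a matroid with rank function r be given on V. Let P = { x ∈ ℝ^V : x ≥ 0 and Σ_{e ∈ A} x_e ≤ r(A) for all A ⊆ V } be the matroid polytope and P_F = { x ∈ [0,1]^V : ℓ_c ≤ Σ_{e ∈ V_c} x_e ≤ u_c for all c }. Then the polytope P_F ∩ P is integral: every extreme point of P_F ∩ P is a 0–1 vector. -/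
/-- The rank of a set `A`: the maximum cardinality of an independent subset of `A`. -/
noncomputable def FinMatroid.rank {V : Type*} [DecidableEq V]
    (M : FinMatroid V) (A : Finset V) : ℕ :=
  sSup {n : ℕ | ∃ I ⊆ A, M.Indep I ∧ I.card = n}

namespace FairAux
open Finset Module
open scoped Classical

variable {V : Type*} [DecidableEq V]

/-! ### Basic rank facts -/

theorem rank_bdd {M : FinMatroid V} (A : Finset V) :
    BddAbove {n : ℕ | ∃ I ⊆ A, M.Indep I ∧ I.card = n} := by
  refine ⟨A.card, ?_⟩
  rintro n ⟨I, hIA, _, rfl⟩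
  exact Finset.card_le_card hIA

theorem rank_exists (M : FinMatroid V) (A : Finset V) :
    ∃ I, I ⊆ A ∧ M.Indep I ∧ I.card = M.rank A := by
  have h := Nat.sSup_mem (s := {n : ℕ | ∃ I ⊆ A, M.Indep I ∧ I.card = n})
    ⟨0, ∅, by simp [M.empty_indep]⟩ (rank_bdd A)
  obtain ⟨I, hIA, hI, hc⟩ := h
  exact ⟨I, hIA, hI, hc⟩

theorem card_le_rank {M : FinMatroid V} {A I : Finset V} (hIA : I ⊆ A) (hI : M.Indep I) :
    I.card ≤ M.rank A :=
  le_csSup (rank_bdd A) ⟨I, hIA, hI, rfl⟩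

theorem rank_empty (M : FinMatroid V) : M.rank ∅ = 0 := by
  obtain ⟨I, hIA, _, hc⟩ := rank_exists M (∅ : Finset V)
  simp only [Finset.subset_empty] at hIA
  simp [← hc, hIA]

theorem exists_basis_ext {M : FinMatroid V} {A : Finset V} :
    ∀ k (I : Finset V), I ⊆ A → M.Indep I → M.rank A - I.card = k →
      ∃ J, I ⊆ J ∧ J ⊆ A ∧ M.Indep J ∧ J.card = M.rank A := by
  intro k
  induction k with
  | zero =>
    intro I hIA hI h0
    have := card_le_rank hIA hI
    exact ⟨I, Finset.Subset.refl I, hIA, hI, by omega⟩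
  | succ k ih =>
    intro I hIA hI hk
    obtain ⟨B, hBA, hB, hBc⟩ := rank_exists M A
    have hlt : I.card < B.card := by
      have := card_le_rank hIA hI; omega
    obtain ⟨e, heB, heI, hind⟩ := M.augment hI hB hlt
    have hsub : insert e I ⊆ A := Finset.insert_subset (hBA heB) hIA
    have hcard : (insert e I).card = I.card + 1 := Finset.card_insert_of_notMem heI
    obtain ⟨J, hJ1, hJ2, hJ3, hJ4⟩ := ih (insert e I) hsub hind (by omega)
    exact ⟨J, (Finset.subset_insert e I).trans hJ1, hJ2, hJ3, hJ4⟩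

theorem rank_submodular (M : FinMatroid V) (A B : Finset V) :
    M.rank (A ∪ B) + M.rank (A ∩ B) ≤ M.rank A + M.rank B := by
  obtain ⟨I, hIsub, hI, hIc⟩ := rank_exists M (A ∩ B)
  obtain ⟨J, hIJ, hJsub, hJ, hJc⟩ := exists_basis_ext (M.rank (A ∪ B) - I.card) I
    (hIsub.trans (Finset.inter_subset_left.trans Finset.subset_union_left)) hI rfl
  have h1 : (J ∩ A).card + (J ∩ B).card = ((J ∩ A) ∪ (J ∩ B)).card + ((J ∩ A) ∩ (J ∩ B)).card :=
    (Finset.card_union_add_card_inter _ _).symm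
  have h2 : (J ∩ A) ∪ (J ∩ B) = J := by
    rw [← Finset.inter_union_distrib_left]
    exact Finset.inter_eq_left.2 hJsub
  have h3 : (J ∩ A) ∩ (J ∩ B) = J ∩ (A ∩ B) := by
    ext v; simp [Finset.mem_inter]; tauto
  have h4 : (J ∩ (A ∩ B)).card = I.card := by
    have hle : (J ∩ (A ∩ B)).card ≤ M.rank (A ∩ B) :=
      card_le_rank Finset.inter_subset_right (M.subset_indep Finset.inter_subset_left hJ)
    have hge : I ⊆ J ∩ (A ∩ B) := Finset.subset_inter hIJ hIsub
    have := Finset.card_le_card hge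
    omega
  have h5 : (J ∩ A).card ≤ M.rank A :=
    card_le_rank Finset.inter_subset_right (M.subset_indep Finset.inter_subset_left hJ)
  have h6 : (J ∩ B).card ≤ M.rank B :=
    card_le_rank Finset.inter_subset_right (M.subset_indep Finset.inter_subset_left hJ)
  rw [h2, h3, h4] at h1
  omega

/-! ### Integer-sum lemmas -/

theorem int_sum (x : V → ℝ) (A : Finset V) (h : ∀ a ∈ A, ∃ m : ℤ, x a = m) :
    ∃ m : ℤ, ∑ a ∈ A, x a = m := by
  classical
  induction A using Finset.induction with
  | empty => exact ⟨0, by simp⟩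
  | insert b s ha ih =>
    obtain ⟨m, hm⟩ := ih (fun a haa => h a (Finset.mem_insert_of_mem haa))
    obtain ⟨k, hk⟩ := h b (Finset.mem_insert_self b s)
    exact ⟨k + m, by rw [Finset.sum_insert ha, hm, hk]; push_cast; ring⟩

theorem exists_second_frac' (x : V → ℝ) (A : Finset V) (k : ℤ)
    (hsum : ∑ a ∈ A, x a = k) {f : V} (hf : f ∈ A) (hf0 : x f ≠ 0) (hf1 : x f ≠ 1)
    (hbd : ∀ a, 0 ≤ x a ∧ x a ≤ 1) :
    ∃ g ∈ A, g ≠ f ∧ x g ≠ 0 ∧ x g ≠ 1 := by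
  classical
  by_contra hcon
  push_neg at hcon
  have hrest : ∀ a ∈ A.erase f, ∃ m : ℤ, x a = m := by
    intro a ha
    by_cases h0 : x a = 0
    · exact ⟨0, by simpa using h0⟩
    · exact ⟨1, by
        simpa using hcon a (Finset.mem_of_mem_erase ha) (Finset.ne_of_mem_erase ha) h0⟩
  obtain ⟨m, hm⟩ := int_sum x (A.erase f) hrest
  have hsplit : ∑ a ∈ A, x a = x f + ∑ a ∈ A.erase f, x a := (Finset.add_sum_erase A x hf).symm
  have hxf : x f = ((k - m : ℤ) : ℝ) := by push_cast; rw [hsum] at hsplit; linarith [hsplit, hm]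
  have h0 : (0:ℝ) < ((k - m : ℤ) : ℝ) := by
    rcases (hbd f).1.lt_or_eq with h | h
    · rwa [hxf] at h
    · exact absurd h.symm hf0
  have h1 : ((k - m : ℤ) : ℝ) < 1 := by
    rcases (hbd f).2.lt_or_eq with h | h
    · rwa [hxf] at h
    · exact absurd h hf1
  have h0' : 0 < k - m := by exact_mod_cast h0
  have h1' : k - m < 1 := by exact_mod_cast h1
  omega

/-! ### Tight sets, minimal tight sets and classes -/

section TightSets
variable [Fintype V] (M : FinMatroid V) (x : V → ℝ)

def Tight (A : Finset V) : Prop := ∑ a ∈ A, x a = (M.rank A : ℝ)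

noncomputable def Tf (f : V) : Finset V :=
  (Finset.univ.powerset.filter (fun A => Tight M x A ∧ f ∈ A)).inf id

noncomputable def fracs : Finset V := Finset.univ.filter (fun e => x e ≠ 0 ∧ x e ≠ 1)

def covered (f : V) : Prop := ∃ A, Tight M x A ∧ f ∈ A

noncomputable def cls (f : V) : Finset V :=
  (fracs x).filter (fun g => covered M x g ∧ Tf M x g = Tf M x f)

theorem tight_empty' : Tight M x ∅ := by simp [Tight, rank_empty]

theorem mem_Tf' (f : V) : f ∈ Tf M x f := by
  have : ({f} : Finset V) ≤ Tf M x f := by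
    apply Finset.le_inf
    intro A hA
    simp only [Finset.mem_filter] at hA
    simpa [id] using Finset.singleton_subset_iff.2 hA.2.2
  simpa using this

variable {M x}

theorem Tf_subset' {f : V} {A : Finset V} (hA : Tight M x A) (hf : f ∈ A) :
    Tf M x f ⊆ A := by
  have h : A ∈ Finset.univ.powerset.filter (fun A => Tight M x A ∧ f ∈ A) := by
    simp [hA, hf]
  have := Finset.inf_le (f := id) h
  simpa [Tf] using this

theorem tight_union_inter (hxA : ∀ A : Finset V, ∑ a ∈ A, x a ≤ (M.rank A : ℝ))
    {A B : Finset V} (hA : Tight M x A) (hB : Tight M x B) :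
    Tight M x (A ∪ B) ∧ Tight M x (A ∩ B) := by
  have hsum : ∑ a ∈ A ∪ B, x a + ∑ a ∈ A ∩ B, x a = ∑ a ∈ A, x a + ∑ a ∈ B, x a :=
    Finset.sum_union_inter
  have h1 := hxA (A ∪ B)
  have h2 := hxA (A ∩ B)
  have h3 := rank_submodular M A B
  have h3' : (M.rank (A ∪ B) : ℝ) + (M.rank (A ∩ B) : ℝ) ≤ (M.rank A : ℝ) + (M.rank B : ℝ) := by
    exact_mod_cast h3
  unfold Tight at *
  constructor <;> linarith

theorem tight_union' (hxA : ∀ A : Finset V, ∑ a ∈ A, x a ≤ (M.rank A : ℝ))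
    {A B : Finset V} (hA : Tight M x A) (hB : Tight M x B) : Tight M x (A ∪ B) :=
  (tight_union_inter hxA hA hB).1

theorem tight_Tf' (hxA : ∀ A : Finset V, ∑ a ∈ A, x a ≤ (M.rank A : ℝ))
    {f : V} (hcov : covered M x f) : Tight M x (Tf M x f) := by
  obtain ⟨A0, hA0, hfA0⟩ := hcov
  have hne : (Finset.univ.powerset.filter (fun A => Tight M x A ∧ f ∈ A)).Nonempty :=
    ⟨A0, by simp [hA0, hfA0]⟩
  have := Finset.inf'_mem (s := {A : Finset V | Tight M x A})
    (fun a ha b hb => (tight_union_inter hxA ha hb).2)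
    _ hne id (fun A hA => by simpa using (Finset.mem_filter.1 hA).2.1)
  rwa [Finset.inf'_eq_inf] at this

theorem mem_fracs {e : V} : e ∈ fracs x ↔ x e ≠ 0 ∧ x e ≠ 1 := by simp [fracs]

theorem tight_biUnion (hxA : ∀ A : Finset V, ∑ a ∈ A, x a ≤ (M.rank A : ℝ))
    (s : Finset V) (t : V → Finset V)
    (ht : ∀ i ∈ s, Tight M x (t i)) : Tight M x (s.biUnion t) := by
  induction s using Finset.induction with
  | empty => simpa using tight_empty' M x
  | insert b s ha ih =>
    rw [Finset.biUnion_insert]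
    exact tight_union' hxA (ht b (Finset.mem_insert_self b s))
      (ih fun i hi => ht i (Finset.mem_insert_of_mem hi))

theorem covered_of_mem_tight {A : Finset V} (hA : Tight M x A) {g : V} (hg : g ∈ A) :
    covered M x g := ⟨A, hA, hg⟩

theorem mem_cls_self {f : V} (hf : f ∈ fracs x) (hcov : covered M x f) :
    f ∈ cls M x f := by simp [cls, hf, hcov]

theorem cls_subset_fracs (f : V) : cls M x f ⊆ fracs x := Finset.filter_subset _ _

theorem cls_eq_of_mem {f g : V} (hg : g ∈ cls M x f) : cls M x g = cls M x f := by
  simp only [cls, Finset.mem_filter] at hg ⊢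
  ext h
  simp only [cls, Finset.mem_filter, hg.2.2]

theorem cls_subset_tight {f : V} {A : Finset V} (hA : Tight M x A) (hf : f ∈ A) :
    cls M x f ⊆ A := by
  intro g hg
  simp only [cls, Finset.mem_filter] at hg
  have h1 : g ∈ Tf M x g := mem_Tf' M x g
  rw [hg.2.2] at h1
  exact Tf_subset' hA hf h1

theorem two_le_card_cls (hxA : ∀ A : Finset V, ∑ a ∈ A, x a ≤ (M.rank A : ℝ))
    (hx01 : ∀ e, 0 ≤ x e ∧ x e ≤ 1)
    {f : V} (hf : f ∈ fracs x) (hcov : covered M x f) :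
    2 ≤ (cls M x f).card := by
  set T := Tf M x f with hT
  have hTt : Tight M x T := tight_Tf' hxA hcov
  set B := (T.filter (fun g => Tf M x g ≠ T)).biUnion (fun g => Tf M x g) with hB
  have hBt : Tight M x B := by
    apply tight_biUnion hxA
    intro g hg
    exact tight_Tf' hxA (covered_of_mem_tight hTt (Finset.mem_of_mem_filter g hg))
  have hBsub : B ⊆ T := by
    intro h hh
    simp only [hB, Finset.mem_biUnion, Finset.mem_filter] at hh
    obtain ⟨g, ⟨hgT, _⟩, hhg⟩ := hh
    exact Tf_subset' hTt hgT hhg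
  have hfT : f ∈ T := mem_Tf' M x f
  have hfB : f ∉ B := by
    intro hfB
    simp only [hB, Finset.mem_biUnion, Finset.mem_filter] at hfB
    obtain ⟨g, ⟨hgT, hgne⟩, hfg⟩ := hfB
    have h1 : T ⊆ Tf M x g := Tf_subset' (tight_Tf' hxA (covered_of_mem_tight hTt hgT)) hfg
    have h2 : Tf M x g ⊆ T := Tf_subset' hTt hgT
    exact hgne (Finset.Subset.antisymm h2 h1)
  have hsum : ∑ a ∈ T \ B, x a = (((M.rank T : ℤ) - (M.rank B : ℤ) : ℤ) : ℝ) := by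
    rw [Finset.sum_sdiff_eq_sub hBsub]
    have h1 : ∑ a ∈ T, x a = (M.rank T : ℝ) := hTt
    have h2 : ∑ a ∈ B, x a = (M.rank B : ℝ) := hBt
    rw [h1, h2]; push_cast; ring
  obtain ⟨g, hgTB, hgf, hg0, hg1⟩ := exists_second_frac' x (T \ B) _ hsum
    (Finset.mem_sdiff.2 ⟨hfT, hfB⟩) (mem_fracs.1 hf).1 (mem_fracs.1 hf).2 hx01
  have hgT : g ∈ T := (Finset.mem_sdiff.1 hgTB).1
  have hgcls : g ∈ cls M x f := by
    have hTfg : Tf M x g = T := by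
      by_contra hne
      exact (Finset.mem_sdiff.1 hgTB).2
        (Finset.mem_biUnion.2 ⟨g, Finset.mem_filter.2 ⟨hgT, hne⟩, mem_Tf' M x g⟩)
    exact Finset.mem_filter.2 ⟨mem_fracs.2 ⟨hg0, hg1⟩, covered_of_mem_tight hTt hgT, hTfg⟩
  exact Finset.one_lt_card.2 ⟨f, mem_cls_self hf hcov, g, hgcls, fun h => hgf h.symm⟩

theorem cls_pairwise_disjoint :
    ∀ k1 ∈ ((fracs x).filter (covered M x)).image (cls M x),
    ∀ k2 ∈ ((fracs x).filter (covered M x)).image (cls M x),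
      k1 ≠ k2 → Disjoint k1 k2 := by
  intro k1 hk1 k2 hk2 hne
  obtain ⟨f1, _, rfl⟩ := Finset.mem_image.1 hk1
  obtain ⟨f2, _, rfl⟩ := Finset.mem_image.1 hk2
  rw [Finset.disjoint_left]
  intro g hg1 hg2
  exact hne ((cls_eq_of_mem hg1).symm.trans (cls_eq_of_mem hg2))

theorem sum_d_tight (hxA : ∀ A : Finset V, ∑ a ∈ A, x a ≤ (M.rank A : ℝ))
    (d : V → ℝ) (hd0 : ∀ e, e ∉ fracs x → d e = 0)
    (hdcls : ∀ f ∈ (fracs x).filter (covered M x), ∑ g ∈ cls M x f, d g = 0)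
    {A : Finset V} (hA : Tight M x A) : ∑ a ∈ A, d a = 0 := by
  have h1 : ∑ a ∈ A, d a = ∑ a ∈ A ∩ fracs x, d a := by
    apply (Finset.sum_subset Finset.inter_subset_left ?_).symm
    intro a haA hna
    exact hd0 a (fun hf => hna (Finset.mem_inter.2 ⟨haA, hf⟩))
  set K := (A ∩ fracs x).image (cls M x) with hK
  have h2 : A ∩ fracs x = K.biUnion id := by
    apply Finset.Subset.antisymm
    · intro g hg
      refine Finset.mem_biUnion.2 ⟨cls M x g, Finset.mem_image_of_mem _ hg, ?_⟩
      exact mem_cls_self (Finset.mem_inter.1 hg).2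
        (covered_of_mem_tight hA (Finset.mem_inter.1 hg).1)
    · intro g hg
      obtain ⟨k, hk, hgk⟩ := Finset.mem_biUnion.1 hg
      obtain ⟨f, hf, rfl⟩ := Finset.mem_image.1 hk
      simp only [id] at hgk
      refine Finset.mem_inter.2 ⟨?_, cls_subset_fracs f hgk⟩
      exact cls_subset_tight hA (Finset.mem_inter.1 hf).1 hgk
  have h3 : ∑ a ∈ K.biUnion id, d a = ∑ k ∈ K, ∑ a ∈ k, d a := by
    apply Finset.sum_biUnion
    intro k1 hk1 k2 hk2 hne
    obtain ⟨f1, _, rfl⟩ := Finset.mem_image.1 hk1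
    obtain ⟨f2, _, rfl⟩ := Finset.mem_image.1 hk2
    rw [Function.onFun, Finset.disjoint_left]
    intro g hg1 hg2
    exact hne ((cls_eq_of_mem hg1).symm.trans (cls_eq_of_mem hg2))
  rw [h1, h2, h3]
  apply Finset.sum_eq_zero
  intro k hk
  obtain ⟨f, hf, rfl⟩ := Finset.mem_image.1 hk
  exact hdcls f (Finset.mem_filter.2 ⟨(Finset.mem_inter.1 hf).2,
    covered_of_mem_tight hA (Finset.mem_inter.1 hf).1⟩)

end TightSets

/-! ### Existence of a perturbation direction -/

section Direction
variable [Fintype V]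

noncomputable def phi (s : Finset V) : Module.Dual ℝ (V → ℝ) :=
  ∑ v ∈ s, LinearMap.proj v

theorem phi_apply (s : Finset V) (d : V → ℝ) : phi s d = ∑ v ∈ s, d v := by
  simp [phi, LinearMap.sum_apply]

theorem phi_biUnion (K : Finset (Finset V))
    (hdis : ∀ k1 ∈ K, ∀ k2 ∈ K, k1 ≠ k2 → Disjoint k1 k2) :
    phi (K.biUnion id) = ∑ k ∈ K, phi k := by
  unfold phi
  have hd : Set.PairwiseDisjoint (↑K : Set (Finset V)) id :=
    fun k1 h1 k2 h2 hne => hdis k1 h1 k2 h2 hne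
  rw [Finset.sum_biUnion hd]
  rfl

theorem exists_direction (F : Finset V) (hFne : F.Nonempty)
    (K1 K2 : Finset (Finset V))
    (h1sub : ∀ k ∈ K1, k ⊆ F) (h2sub : ∀ k ∈ K2, k ⊆ F)
    (h1two : ∀ k ∈ K1, 2 ≤ k.card) (h2two : ∀ k ∈ K2, 2 ≤ k.card)
    (h1dis : ∀ k1 ∈ K1, ∀ k2 ∈ K1, k1 ≠ k2 → Disjoint k1 k2)
    (h2dis : ∀ k1 ∈ K2, ∀ k2 ∈ K2, k1 ≠ k2 → Disjoint k1 k2) :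
    ∃ d : V → ℝ, d ≠ 0 ∧ (∀ e ∉ F, d e = 0) ∧
      (∀ k ∈ K1, ∑ v ∈ k, d v = 0) ∧ (∀ k ∈ K2, ∑ v ∈ k, d v = 0) := by
  set F1 := K1.biUnion id with hF1
  set F2 := K2.biUnion id with hF2
  by_cases hcaseA : ∃ e ∈ F, e ∉ F1 ∧ e ∉ F2
  · obtain ⟨e, heF, heF1, heF2⟩ := hcaseA
    refine ⟨Pi.single e 1, ?_, ?_, ?_, ?_⟩
    · intro h
      have := congrFun h e
      simp [Pi.single_apply] at this
    · intro e' he'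
      have : e' ≠ e := fun h => he' (h ▸ heF)
      simp [Pi.single_apply, this]
    · intro k hk
      have : e ∉ k := fun hek => heF1 (Finset.mem_biUnion.2 ⟨k, hk, hek⟩)
      calc ∑ v ∈ k, Pi.single e (1:ℝ) v = ∑ v ∈ k, if v = e then 1 else 0 := by
            apply Finset.sum_congr rfl; intro v _; simp [Pi.single_apply]
      _ = 0 := by rw [Finset.sum_ite_eq' k e (fun _ => (1:ℝ))]; simp [this]
    · intro k hk
      have : e ∉ k := fun hek => heF2 (Finset.mem_biUnion.2 ⟨k, hk, hek⟩)
      calc ∑ v ∈ k, Pi.single e (1:ℝ) v = ∑ v ∈ k, if v = e then 1 else 0 := by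
            apply Finset.sum_congr rfl; intro v _; simp [Pi.single_apply]
      _ = 0 := by rw [Finset.sum_ite_eq' k e (fun _ => (1:ℝ))]; simp [this]
  · push_neg at hcaseA
    have hF1sub : F1 ⊆ F := by
      intro v hv; obtain ⟨k, hk, hvk⟩ := Finset.mem_biUnion.1 hv; exact h1sub k hk hvk
    have hF2sub : F2 ⊆ F := by
      intro v hv; obtain ⟨k, hk, hvk⟩ := Finset.mem_biUnion.1 hv; exact h2sub k hk hvk
    have hcover : F ⊆ F1 ∪ F2 := by
      intro v hv
      rcases Classical.em (v ∈ F1) with h | h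
      · exact Finset.mem_union_left _ h
      · exact Finset.mem_union_right _ (hcaseA v hv h)
    have hb1 : F1.card = ∑ k ∈ K1, (id k).card :=
      Finset.card_biUnion (fun k1 h1 k2 h2 hne => h1dis k1 h1 k2 h2 hne)
    have hb2 : F2.card = ∑ k ∈ K2, (id k).card :=
      Finset.card_biUnion (fun k1 h1 k2 h2 hne => h2dis k1 h1 k2 h2 hne)
    have hcard1 : 2 * K1.card ≤ F1.card := by
      rw [hb1]
      calc 2 * K1.card = ∑ _k ∈ K1, 2 := by rw [Finset.sum_const]; ring
      _ ≤ ∑ k ∈ K1, (id k).card := Finset.sum_le_sum (fun k hk => h1two k hk)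
    have hcard2 : 2 * K2.card ≤ F2.card := by
      rw [hb2]
      calc 2 * K2.card = ∑ _k ∈ K2, 2 := by rw [Finset.sum_const]; ring
      _ ≤ ∑ k ∈ K2, (id k).card := Finset.sum_le_sum (fun k hk => h2two k hk)
    have hmn : F.card ≤ Fintype.card V := Finset.card_le_univ F
    have hm1 : 1 ≤ F.card := Finset.card_pos.2 hFne
    set W0 : Submodule ℝ (Module.Dual ℝ (V → ℝ)) :=
      Submodule.span ℝ (((Finset.univ \ F).image (fun e => phi {e}) : Finset _) : Set _) with hW0
    set W1 : Submodule ℝ (Module.Dual ℝ (V → ℝ)) :=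
      Submodule.span ℝ ((K1.image phi : Finset _) : Set _) with hW1
    set W2 : Submodule ℝ (Module.Dual ℝ (V → ℝ)) :=
      Submodule.span ℝ ((K2.image phi : Finset _) : Set _) with hW2
    have hrk0 : finrank ℝ W0 ≤ Fintype.card V - F.card := by
      refine le_trans (finrank_span_finset_le_card _) ?_
      refine le_trans (Finset.card_image_le) ?_
      rw [Finset.card_sdiff_of_subset (Finset.subset_univ F)]
      simp
    have hrk1 : finrank ℝ W1 ≤ K1.card :=
      le_trans (finrank_span_finset_le_card _) Finset.card_image_le
    have hrk2 : finrank ℝ W2 ≤ K2.card :=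
      le_trans (finrank_span_finset_le_card _) Finset.card_image_le
    have hsup12 : finrank ℝ ↥(W1 ⊔ W2) ≤ F.card - 1 := by
      by_cases hB2 : F ⊆ F1 ∩ F2
      · have hF1F : F1 = F := Finset.Subset.antisymm hF1sub
          (fun v hv => (Finset.mem_inter.1 (hB2 hv)).1)
        have hF2F : F2 = F := Finset.Subset.antisymm hF2sub
          (fun v hv => (Finset.mem_inter.1 (hB2 hv)).2)
        have hmem1 : phi F ∈ W1 := by
          rw [← hF1F, hF1, phi_biUnion K1 h1dis]
          exact Submodule.sum_mem _ (fun k hk =>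
            Submodule.subset_span (by exact_mod_cast Finset.mem_image_of_mem phi hk))
        have hmem2 : phi F ∈ W2 := by
          rw [← hF2F, hF2, phi_biUnion K2 h2dis]
          exact Submodule.sum_mem _ (fun k hk =>
            Submodule.subset_span (by exact_mod_cast Finset.mem_image_of_mem phi hk))
        have hphiF : phi F ≠ 0 := by
          obtain ⟨e, he⟩ := hFne
          intro h
          have := congrFun (congrArg DFunLike.coe h) (Pi.single e (1:ℝ))
          rw [phi_apply] at this
          simp only [LinearMap.zero_apply] at this
          have h2 : ∑ v ∈ F, Pi.single e (1:ℝ) v = 1 := by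
            calc ∑ v ∈ F, Pi.single e (1:ℝ) v = ∑ v ∈ F, if v = e then 1 else 0 := by
                  apply Finset.sum_congr rfl; intro v _; simp [Pi.single_apply]
            _ = 1 := by rw [Finset.sum_ite_eq' F e (fun _ => (1:ℝ))]; simp [he]
          rw [h2] at this
          exact one_ne_zero this
        have hinf : 1 ≤ finrank ℝ ↥(W1 ⊓ W2) := by
          refine Nat.one_le_iff_ne_zero.2 (fun h0 => ?_)
          have hbot : W1 ⊓ W2 = ⊥ := Submodule.finrank_eq_zero.1 h0
          have : phi F ∈ (⊥ : Submodule ℝ (Module.Dual ℝ (V → ℝ))) :=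
            hbot ▸ Submodule.mem_inf.2 ⟨hmem1, hmem2⟩
          exact hphiF (Submodule.mem_bot _ |>.1 this)
        have hid := Submodule.finrank_sup_add_finrank_inf_eq W1 W2
        have h2pq : 2 * (K1.card + K2.card) ≤ 2 * F.card := by
          have e1 : F1.card = F.card := by rw [hF1F]
          have e2 : F2.card = F.card := by rw [hF2F]
          omega
        omega
      · have hlt : (F1 ∩ F2).card < F.card := by
          apply Finset.card_lt_card
          rw [Finset.ssubset_iff_of_subset (Finset.inter_subset_left.trans hF1sub)]
          obtain ⟨v, hvF, hv⟩ := Finset.not_subset.1 hB2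
          exact ⟨v, hvF, hv⟩
        have hsum : F1.card + F2.card = (F1 ∪ F2).card + (F1 ∩ F2).card :=
          (Finset.card_union_add_card_inter F1 F2).symm
        have hun : (F1 ∪ F2).card = F.card := by
          rw [Finset.Subset.antisymm (Finset.union_subset hF1sub hF2sub) hcover]
        have hid := Submodule.finrank_sup_add_finrank_inf_eq W1 W2
        omega
    set U : Submodule ℝ (Module.Dual ℝ (V → ℝ)) := W0 ⊔ (W1 ⊔ W2) with hU
    have hrkU : finrank ℝ U < Fintype.card V := by
      have hid := Submodule.finrank_sup_add_finrank_inf_eq W0 (W1 ⊔ W2)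
      rw [← hU] at hid
      omega
    have hfr : finrank ℝ (V → ℝ) = Fintype.card V := by
      rw [Module.finrank_pi]
    have hco : 1 ≤ finrank ℝ U.dualCoannihilator := by
      have := Subspace.finrank_add_finrank_dualCoannihilator_eq U
      rw [hfr] at this
      omega
    have hne : U.dualCoannihilator ≠ ⊥ := by
      intro h
      rw [h, finrank_bot] at hco
      omega
    obtain ⟨d, hdU, hd0⟩ := Submodule.exists_mem_ne_zero_of_ne_bot hne
    have hall : ∀ s : Finset V, phi s ∈ U → ∑ v ∈ s, d v = 0 := by
      intro s hs
      have := Submodule.mem_dualCoannihilator d |>.1 hdU (phi s) hs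
      rwa [phi_apply] at this
    refine ⟨d, hd0, ?_, ?_, ?_⟩
    · intro e he
      have hmem : phi {e} ∈ U := by
        apply Submodule.mem_sup_left
        exact Submodule.subset_span (by
          exact_mod_cast Finset.mem_image_of_mem _ (Finset.mem_sdiff.2 ⟨Finset.mem_univ e, he⟩))
      have := hall {e} hmem
      simpa using this
    · intro k hk
      exact hall k (Submodule.mem_sup_right (Submodule.mem_sup_left
        (Submodule.subset_span (by exact_mod_cast Finset.mem_image_of_mem phi hk))))
    · intro k hk
      exact hall k (Submodule.mem_sup_right (Submodule.mem_sup_right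
        (Submodule.subset_span (by exact_mod_cast Finset.mem_image_of_mem phi hk))))

end Direction
end FairAux

/-- The intersection of the fairness polytope `P_F` with the matroid polytope `P` is integral:
all of its extreme points are 0–1 vectors. -/
theorem fair_matroid_polytope_integral {V : Type*} [Fintype V] [DecidableEq V]
    {C : ℕ} (color : V → Fin C) (ℓ u : Fin C → ℕ) (hlu : ∀ c, ℓ c ≤ u c)
    (M : FinMatroid V) :
    ∀ x ∈ Set.extremePoints ℝ
      ({x : V → ℝ | (∀ e, 0 ≤ x e ∧ x e ≤ 1) ∧
          ∀ c : Fin C,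
            (ℓ c : ℝ) ≤ ∑ e ∈ Finset.univ.filter (fun e => color e = c), x e ∧
            ∑ e ∈ Finset.univ.filter (fun e => color e = c), x e ≤ (u c : ℝ)} ∩
        {x : V → ℝ | (∀ e, 0 ≤ x e) ∧
          ∀ A : Finset V, ∑ e ∈ A, x e ≤ (M.rank A : ℝ)}),
      ∀ e : V, x e = 0 ∨ x e = 1 := by
  classical
  intro x hx
  rw [mem_extremePoints] at hx
  obtain ⟨hxmem, hxext⟩ := hx
  obtain ⟨⟨hx01, hxcol⟩, ⟨hx0, hxA⟩⟩ := hxmem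
  by_contra hcon
  push_neg at hcon
  obtain ⟨e0, he00, he01⟩ := hcon
  -- notation
  set F : Finset V := FairAux.fracs x with hF
  have hFne : F.Nonempty := ⟨e0, FairAux.mem_fracs.2 ⟨he00, he01⟩⟩
  set Vc : Fin C → Finset V := fun c => Finset.univ.filter (fun e => color e = c) with hVc
  set TightColor : Fin C → Prop :=
    fun c => (∑ e ∈ Vc c, x e = (ℓ c : ℝ)) ∨ (∑ e ∈ Vc c, x e = (u c : ℝ)) with hTC
  set Fc : Finset V := F.filter (FairAux.covered M x) with hFc
  set K1 : Finset (Finset V) := Fc.image (FairAux.cls M x) with hK1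
  set tc : Finset (Fin C) :=
    Finset.univ.filter (fun c => TightColor c ∧ ((Vc c) ∩ F).Nonempty) with htc
  set K2 : Finset (Finset V) := tc.image (fun c => Vc c ∩ F) with hK2
  -- direction existence hypotheses
  have h1sub : ∀ k ∈ K1, k ⊆ F := by
    intro k hk
    obtain ⟨f, _, rfl⟩ := Finset.mem_image.1 hk
    exact FairAux.cls_subset_fracs f
  have h2sub : ∀ k ∈ K2, k ⊆ F := by
    intro k hk
    obtain ⟨c, _, rfl⟩ := Finset.mem_image.1 hk
    exact Finset.inter_subset_right
  have h1two : ∀ k ∈ K1, 2 ≤ k.card := by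
    intro k hk
    obtain ⟨f, hf, rfl⟩ := Finset.mem_image.1 hk
    exact FairAux.two_le_card_cls hxA hx01 (Finset.mem_filter.1 hf).1 (Finset.mem_filter.1 hf).2
  have h2two : ∀ k ∈ K2, 2 ≤ k.card := by
    intro k hk
    obtain ⟨c, hc, rfl⟩ := Finset.mem_image.1 hk
    obtain ⟨_, hct, hcne⟩ := Finset.mem_filter.1 hc
    obtain ⟨f, hf⟩ := hcne
    have hfV : f ∈ Vc c := (Finset.mem_inter.1 hf).1
    have hfF := FairAux.mem_fracs.1 (Finset.mem_inter.1 hf).2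
    have hks : ∃ k : ℤ, ∑ e ∈ Vc c, x e = (k : ℝ) := by
      rcases hct with h | h
      · exact ⟨(ℓ c : ℤ), by rw [h]; push_cast; ring⟩
      · exact ⟨(u c : ℤ), by rw [h]; push_cast; ring⟩
    obtain ⟨kk, hkk⟩ := hks
    obtain ⟨g, hgV, hgf, hg0, hg1⟩ :=
      FairAux.exists_second_frac' x (Vc c) kk hkk hfV hfF.1 hfF.2 hx01
    have hgm : g ∈ Vc c ∩ F := Finset.mem_inter.2 ⟨hgV, FairAux.mem_fracs.2 ⟨hg0, hg1⟩⟩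
    exact Finset.one_lt_card.2 ⟨f, hf, g, hgm, fun h => hgf h.symm⟩
  have h1dis : ∀ k1 ∈ K1, ∀ k2 ∈ K1, k1 ≠ k2 → Disjoint k1 k2 :=
    fun k1 h1 k2 h2 hne => FairAux.cls_pairwise_disjoint k1 h1 k2 h2 hne
  have h2dis : ∀ k1 ∈ K2, ∀ k2 ∈ K2, k1 ≠ k2 → Disjoint k1 k2 := by
    intro k1 hk1 k2 hk2 hne
    obtain ⟨c1, _, rfl⟩ := Finset.mem_image.1 hk1
    obtain ⟨c2, _, rfl⟩ := Finset.mem_image.1 hk2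
    rw [Finset.disjoint_left]
    intro g hg1 hg2
    have hc1 : color g = c1 := by
      have := (Finset.mem_inter.1 hg1).1
      simpa [hVc] using this
    have hc2 : color g = c2 := by
      have := (Finset.mem_inter.1 hg2).1
      simpa [hVc] using this
    exact hne (by rw [← hc1, hc2])
  obtain ⟨d, hdne, hd0, hdK1, hdK2⟩ :=
    FairAux.exists_direction F hFne K1 K2 h1sub h2sub h1two h2two h1dis h2dis
  -- derived zero-sum facts
  have hdtight : ∀ A : Finset V, FairAux.Tight M x A → ∑ a ∈ A, d a = 0 := by
    intro A hA
    apply FairAux.sum_d_tight hxA d hd0 _ hA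
    intro f hf
    exact hdK1 (FairAux.cls M x f) (Finset.mem_image_of_mem _ hf)
  have hdcol : ∀ c : Fin C, TightColor c → ∑ e ∈ Vc c, d e = 0 := by
    intro c hc
    have hsub : ∑ e ∈ Vc c, d e = ∑ e ∈ Vc c ∩ F, d e := by
      apply (Finset.sum_subset Finset.inter_subset_left ?_).symm
      intro a haA hna
      exact hd0 a (fun hf => hna (Finset.mem_inter.2 ⟨haA, hf⟩))
    rw [hsub]
    rcases Finset.eq_empty_or_nonempty (Vc c ∩ F) with h | h
    · simp [h]
    · exact hdK2 _ (Finset.mem_image_of_mem _ (Finset.mem_filter.2 ⟨Finset.mem_univ c, hc, h⟩))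
  -- the perturbed points stay in the set for small t
  set S : Set (V → ℝ) :=
    ({x : V → ℝ | (∀ e, 0 ≤ x e ∧ x e ≤ 1) ∧
        ∀ c : Fin C,
          (ℓ c : ℝ) ≤ ∑ e ∈ Finset.univ.filter (fun e => color e = c), x e ∧
          ∑ e ∈ Finset.univ.filter (fun e => color e = c), x e ≤ (u c : ℝ)} ∩
      {x : V → ℝ | (∀ e, 0 ≤ x e) ∧
        ∀ A : Finset V, ∑ e ∈ A, x e ≤ (M.rank A : ℝ)}) with hS
  have hev : ∀ᶠ t in nhds (0:ℝ), (x + t • d) ∈ S := by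
    have hbound : ∀ᶠ t in nhds (0:ℝ), ∀ e : V, 0 ≤ x e + t * d e ∧ x e + t * d e ≤ 1 := by
      rw [Filter.eventually_all]
      intro e
      by_cases heF : e ∈ F
      · have he0 : 0 < x e := lt_of_le_of_ne (hx01 e).1 (Ne.symm (FairAux.mem_fracs.1 heF).1)
        have he1 : x e < 1 := lt_of_le_of_ne (hx01 e).2 (FairAux.mem_fracs.1 heF).2
        have hcont : Filter.Tendsto (fun t : ℝ => x e + t * d e) (nhds 0) (nhds (x e)) := by
          have : Filter.Tendsto (fun t : ℝ => x e + t * d e) (nhds 0)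
              (nhds (x e + 0 * d e)) := by
            apply Filter.Tendsto.add tendsto_const_nhds
            exact Filter.Tendsto.mul (Filter.tendsto_id) tendsto_const_nhds
          simpa using this
        have hl := hcont.eventually_const_lt he0
        have hr := hcont.eventually_lt_const he1
        filter_upwards [hl, hr] with t h1 h2
        exact ⟨le_of_lt h1, le_of_lt h2⟩
      · have hde : d e = 0 := hd0 e heF
        apply Filter.Eventually.of_forall
        intro t
        rw [hde]
        simpa using hx01 e
    have hcolev : ∀ᶠ t in nhds (0:ℝ), ∀ c : Fin C,
        (ℓ c : ℝ) ≤ ∑ e ∈ Vc c, (x e + t * d e) ∧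
        ∑ e ∈ Vc c, (x e + t * d e) ≤ (u c : ℝ) := by
      rw [Filter.eventually_all]
      intro c
      have hsplit : ∀ t : ℝ, ∑ e ∈ Vc c, (x e + t * d e)
          = ∑ e ∈ Vc c, x e + t * ∑ e ∈ Vc c, d e := by
        intro t
        rw [Finset.sum_add_distrib, Finset.mul_sum]
      by_cases hc : TightColor c
      · have hz := hdcol c hc
        apply Filter.Eventually.of_forall
        intro t
        rw [hsplit, hz, mul_zero, add_zero]
        exact hxcol c
      · have hcl : (ℓ c : ℝ) < ∑ e ∈ Vc c, x e := by
          rcases lt_of_le_of_ne (hxcol c).1 (fun h => hc (Or.inl h.symm)) with h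
          exact h
        have hcu : ∑ e ∈ Vc c, x e < (u c : ℝ) :=
          lt_of_le_of_ne (hxcol c).2 (fun h => hc (Or.inr h))
        have hcont : Filter.Tendsto (fun t : ℝ => ∑ e ∈ Vc c, x e + t * ∑ e ∈ Vc c, d e)
            (nhds 0) (nhds (∑ e ∈ Vc c, x e)) := by
          have : Filter.Tendsto (fun t : ℝ => ∑ e ∈ Vc c, x e + t * ∑ e ∈ Vc c, d e) (nhds 0)
              (nhds (∑ e ∈ Vc c, x e + 0 * ∑ e ∈ Vc c, d e)) := by
            apply Filter.Tendsto.add tendsto_const_nhds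
            exact Filter.Tendsto.mul (Filter.tendsto_id) tendsto_const_nhds
          simpa using this
        have hl := hcont.eventually_const_lt hcl
        have hr := hcont.eventually_lt_const hcu
        filter_upwards [hl, hr] with t h1 h2
        rw [hsplit]
        exact ⟨le_of_lt h1, le_of_lt h2⟩
    have hmatev : ∀ᶠ t in nhds (0:ℝ), ∀ A : Finset V,
        ∑ e ∈ A, (x e + t * d e) ≤ (M.rank A : ℝ) := by
      rw [Filter.eventually_all]
      intro A
      have hsplit : ∀ t : ℝ, ∑ e ∈ A, (x e + t * d e)
          = ∑ e ∈ A, x e + t * ∑ e ∈ A, d e := by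
        intro t
        rw [Finset.sum_add_distrib, Finset.mul_sum]
      by_cases hA : FairAux.Tight M x A
      · have hz := hdtight A hA
        apply Filter.Eventually.of_forall
        intro t
        rw [hsplit, hz, mul_zero, add_zero]
        exact hxA A
      · have hlt : ∑ e ∈ A, x e < (M.rank A : ℝ) := lt_of_le_of_ne (hxA A) hA
        have hcont : Filter.Tendsto (fun t : ℝ => ∑ e ∈ A, x e + t * ∑ e ∈ A, d e)
            (nhds 0) (nhds (∑ e ∈ A, x e)) := by
          have : Filter.Tendsto (fun t : ℝ => ∑ e ∈ A, x e + t * ∑ e ∈ A, d e) (nhds 0)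
              (nhds (∑ e ∈ A, x e + 0 * ∑ e ∈ A, d e)) := by
            apply Filter.Tendsto.add tendsto_const_nhds
            exact Filter.Tendsto.mul (Filter.tendsto_id) tendsto_const_nhds
          simpa using this
        have hr := hcont.eventually_lt_const hlt
        filter_upwards [hr] with t h2
        rw [hsplit]
        exact le_of_lt h2
    filter_upwards [hbound, hcolev, hmatev] with t h1 h2 h3
    have happ : ∀ e : V, (x + t • d) e = x e + t * d e := by
      intro e; simp
    constructor
    · constructor
      · intro e; rw [happ e]; exact h1 e
      · intro c
        have := h2 c
        constructor
        · refine le_trans this.1 (le_of_eq ?_)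
          apply Finset.sum_congr rfl
          intro e _; rw [happ e]
        · refine le_trans (le_of_eq ?_) this.2
          apply Finset.sum_congr rfl
          intro e _; rw [happ e]
    · constructor
      · intro e; rw [happ e]; exact (h1 e).1
      · intro A
        refine le_trans (le_of_eq ?_) (h3 A)
        apply Finset.sum_congr rfl
        intro e _; rw [happ e]
  -- pick a small positive t
  obtain ⟨ε, hε, hball⟩ := Metric.eventually_nhds_iff.1 hev
  set t0 : ℝ := ε / 2 with ht0
  have ht0pos : 0 < t0 := by positivity
  have hmem1 : (x + t0 • d) ∈ S := by
    apply hball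
    simp only [Real.dist_eq, sub_zero]
    rw [abs_of_pos ht0pos]
    linarith
  have hmem2 : (x + (-t0) • d) ∈ S := by
    apply hball
    simp only [Real.dist_eq, sub_zero]
    rw [abs_of_neg (by linarith : -t0 < 0)]
    simp only [neg_neg]
    linarith
  have hseg : x ∈ openSegment ℝ (x + t0 • d) (x + (-t0) • d) := by
    refine ⟨1/2, 1/2, by norm_num, by norm_num, by norm_num, ?_⟩
    funext v
    simp only [Pi.add_apply, Pi.smul_apply, smul_eq_mul]
    ring
  have hcontr := hxext _ hmem1 _ hmem2 hseg
  have : t0 • d = 0 := by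
    have h := hcontr.1
    have h2 : x + t0 • d = x := h
    calc t0 • d = (x + t0 • d) - x := by abel
    _ = 0 := by rw [h2]; abel
  rcases smul_eq_zero.1 this with h | h
  · exact absurd h (ne_of_gt ht0pos)
  · exact hdne h
end

section
/- Let f : 2^V → ℝ be a nonnegative, monotone, submodular set function on a finite set V with f(∅) = 0, let ε ≥ 0, and let o₁, …, o_ℓ be distinct elements of V and s₁, …, s_ℓ elements of V. Write S_i = {s₁, …, s_i} (with S₀ = ∅). If for every i = 1, …, ℓ it holds that f(s_i | S_{i−1}) ≥ f(o_i | S_{i−1}) − ε, then 2·f(S_ℓ) + ℓ·ε ≥ f({o₁, …, o_ℓ}). -/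
/-- If `f` is a nonnegative monotone submodular function with `f ∅ = 0`, the `o i` (for
`i < ℓ`) are distinct, and at every step `i` the marginal gain of `s i` with respect to
`S_i = {s 0, …, s (i-1)}` is at least that of `o i` minus `ε ≥ 0`, then
`2·f(S_ℓ) + ℓ·ε ≥ f({o 0, …, o (ℓ-1)})`. -/
theorem twice_greedy_plus_error_ge_opt {V : Type*} [DecidableEq V]
    (f : Finset V → ℝ)
    (hnn : ∀ A : Finset V, 0 ≤ f A)
    (hmono : ∀ ⦃A B : Finset V⦄, A ⊆ B → f A ≤ f B)
    (hsub : ∀ A B : Finset V, f (A ∪ B) + f (A ∩ B) ≤ f A + f B)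
    (hempty : f ∅ = 0)
    (ε : ℝ) (hε : 0 ≤ ε)
    (ℓ : ℕ) (o s : ℕ → V)
    (ho : ∀ i < ℓ, ∀ j < ℓ, i ≠ j → o i ≠ o j)
    (hgain : ∀ i < ℓ,
      f (insert (s i) ((Finset.range i).image s)) - f ((Finset.range i).image s) ≥
        (f (insert (o i) ((Finset.range i).image s)) - f ((Finset.range i).image s)) - ε) :
    2 * f ((Finset.range ℓ).image s) + (ℓ : ℝ) * ε ≥ f ((Finset.range ℓ).image o) := by
  set S : ℕ → Finset V := fun i => (Finset.range i).image s with hS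
  -- Lemma A: adding the o's one at a time
  have key : ∀ (T : Finset V) (k : ℕ),
      f (T ∪ (Finset.range k).image o) ≤
        f T + ∑ i ∈ Finset.range k, (f (insert (o i) T) - f T) := by
    intro T k
    induction k with
    | zero => simp
    | succ k ih =>
      rw [Finset.sum_range_succ, Finset.range_add_one, Finset.image_insert]
      have h1 := hsub (insert (o k) T) (T ∪ (Finset.range k).image o)
      have h2 : T ⊆ insert (o k) T ∩ (T ∪ (Finset.range k).image o) :=
        Finset.subset_inter (Finset.subset_insert _ _) Finset.subset_union_left
      have h3 := hmono h2
      rw [Finset.insert_union, ← Finset.union_assoc, Finset.union_self] at h1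
      have h4 : T ∪ insert (o k) ((Finset.range k).image o) =
          insert (o k) (T ∪ (Finset.range k).image o) := by
        rw [Finset.union_insert]
      rw [h4]
      linarith
  have hSsub : ∀ i, i ≤ ℓ → S i ⊆ S ℓ := fun i hi =>
    Finset.image_subset_image (Finset.range_subset_range.2 hi)
  -- step: marginal wrt S ℓ ≤ marginal wrt S i
  have hstep : ∀ i < ℓ, f (insert (o i) (S ℓ)) - f (S ℓ) ≤ f (insert (o i) (S i)) - f (S i) := by
    intro i hi
    have h1 := hsub (insert (o i) (S i)) (S ℓ)
    have hu : insert (o i) (S i) ∪ S ℓ = insert (o i) (S ℓ) := by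
      rw [Finset.insert_union, Finset.union_eq_right.2 (hSsub i hi.le)]
    have h2 : S i ⊆ insert (o i) (S i) ∩ S ℓ :=
      Finset.subset_inter (Finset.subset_insert _ _) (hSsub i hi.le)
    have h3 := hmono h2
    rw [hu] at h1
    linarith
  have sum1 : ∑ i ∈ Finset.range ℓ, (f (insert (o i) (S ℓ)) - f (S ℓ)) ≤
      ∑ i ∈ Finset.range ℓ, (f (insert (s i) (S i)) - f (S i) + ε) := by
    apply Finset.sum_le_sum
    intro i hi
    have hi' := Finset.mem_range.1 hi
    have := hgain i hi'
    have := hstep i hi'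
    simp only [hS] at *
    linarith
  have sum2 : ∑ i ∈ Finset.range ℓ, (f (insert (s i) (S i)) - f (S i)) = f (S ℓ) - f (S 0) := by
    have : ∀ i ∈ Finset.range ℓ, f (insert (s i) (S i)) - f (S i) = f (S (i + 1)) - f (S i) := by
      intro i _
      have : S (i + 1) = insert (s i) (S i) := by
        simp only [hS]
        rw [Finset.range_add_one, Finset.image_insert]
      rw [this]
    rw [Finset.sum_congr rfl this, Finset.sum_range_sub (fun i => f (S i))]
  have hmain := key (S ℓ) ℓ
  have hO : f ((Finset.range ℓ).image o) ≤ f (S ℓ ∪ (Finset.range ℓ).image o) :=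
    hmono Finset.subset_union_right
  have sum3 : ∑ i ∈ Finset.range ℓ, (f (insert (s i) (S i)) - f (S i) + ε) =
      (f (S ℓ) - f (S 0)) + (ℓ : ℝ) * ε := by
    rw [Finset.sum_add_distrib, sum2, Finset.sum_const, Finset.card_range, nsmul_eq_mul]
  have hS0 : f (S 0) = 0 := by simp [hS, hempty]
  rw [sum3, hS0] at sum1
  linarith
end

section
/- Let a matroid be given on a finite ground set V, let w : V → ℝ≥0 be a weight function, let U ⊆ V, and let I ⊆ U be an inclusion-maximal independent subset of U that maximizes total weight Σ_{y ∈ I} w(y) among all independent subsets of U. Then for every x ∈ U \ I, the set I' = { y ∈ I : (I \ {y}) ∪ {x} is independent } satisfies: (i) I' ∪ {x} is not independent, and (ii) w(y) ≥ w(x) for every y ∈ I'. -/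
open scoped Classical

private lemma aug_extend {V : Type*} [DecidableEq V] (M : FinMatroid V) :
    ∀ n (A B : Finset V), M.Indep A → M.Indep B → A.card + n = B.card →
      ∃ J, M.Indep J ∧ A ⊆ J ∧ J ⊆ A ∪ B ∧ J.card = B.card := by
  intro n
  induction n with
  | zero =>
    intro A B hA _ hcard
    exact ⟨A, hA, subset_rfl, Finset.subset_union_left, by omega⟩
  | succ n ih =>
    intro A B hA hB hcard
    obtain ⟨e, heB, heA, hind⟩ := M.augment hA hB (by omega)
    obtain ⟨J, hJ, hAJ, hJsub, hJcard⟩ := ih (insert e A) B hind hB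
      (by rw [Finset.card_insert_of_notMem heA]; omega)
    refine ⟨J, hJ, (Finset.subset_insert e A).trans hAJ, hJsub.trans ?_, hJcard⟩
    intro z hz
    rcases Finset.mem_union.1 hz with hz | hz
    · rcases Finset.mem_insert.1 hz with rfl | hz
      · exact Finset.mem_union_right _ heB
      · exact Finset.mem_union_left _ hz
    · exact Finset.mem_union_right _ hz

/-- If `I ⊆ U` is an inclusion-maximal independent subset of `U` which maximizes total
weight among all independent subsets of `U`, then for every `x ∈ U \ I`, the set
`I' = {y ∈ I : (I \ {y}) ∪ {x}` is independent`}` satisfies: `I' ∪ {x}` is not independent,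
and `w y ≥ w x` for every `y ∈ I'`. -/
theorem maximal_max_weight_swap_set {V : Type*} [DecidableEq V] [Fintype V]
    (M : FinMatroid V) (w : V → NNReal) (U I : Finset V)
    (hIU : I ⊆ U) (hIindep : M.Indep I)
    (hImax : ∀ J : Finset V, J ⊆ U → M.Indep J → I ⊆ J → J = I)
    (hIweight : ∀ J : Finset V, J ⊆ U → M.Indep J → ∑ y ∈ J, w y ≤ ∑ y ∈ I, w y)
    (x : V) (hx : x ∈ U \ I) :
    ¬ M.Indep (insert x (I.filter (fun y => M.Indep (insert x (I.erase y))))) ∧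
      ∀ y ∈ I.filter (fun y => M.Indep (insert x (I.erase y))), w x ≤ w y := by
  obtain ⟨hxU, hxI⟩ := Finset.mem_sdiff.1 hx
  set I' := I.filter (fun y => M.Indep (insert x (I.erase y))) with hI'
  have hI'I : I' ⊆ I := Finset.filter_subset _ _
  have hxI' : x ∉ I' := fun h => hxI (hI'I h)
  constructor
  · intro hind
    -- x ∉ I', so card (insert x I') = I'.card + 1
    by_cases hfull : I' = I
    · -- insert x I independent contradicts maximality
      rw [hfull] at hind
      have := hImax (insert x I) (Finset.insert_subset hxU hIU) hind
        (Finset.subset_insert _ _)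
      exact hxI (this ▸ Finset.mem_insert_self x I)
    · have hlt : I'.card < I.card :=
        Finset.card_lt_card (Finset.ssubset_iff_subset_ne.2 ⟨hI'I, hfull⟩)
      have hcard : (insert x I').card + (I.card - (I'.card + 1)) = I.card := by
        rw [Finset.card_insert_of_notMem hxI']; omega
      obtain ⟨J, hJ, hAJ, hJsub, hJcard⟩ := aug_extend M _ (insert x I') I hind hIindep hcard
      have hJsub' : J ⊆ insert x I := by
        intro z hz
        rcases Finset.mem_union.1 (hJsub hz) with hz | hz
        · rcases Finset.mem_insert.1 hz with rfl | hz
          · exact Finset.mem_insert_self _ _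
          · exact Finset.mem_insert_of_mem (hI'I hz)
        · exact Finset.mem_insert_of_mem hz
      have hxJ : x ∈ J := hAJ (Finset.mem_insert_self _ _)
      have hKI : J.erase x ⊆ I := by
        intro z hz
        obtain ⟨hzx, hzJ⟩ := Finset.mem_erase.1 hz
        rcases Finset.mem_insert.1 (hJsub' hzJ) with rfl | h
        · exact absurd rfl hzx
        · exact h
      have hKcard : (J.erase x).card = I.card - 1 := by
        rw [Finset.card_erase_of_mem hxJ, hJcard]
      have hIpos : 0 < I.card := lt_of_le_of_lt (Nat.zero_le _) hlt
      -- pick y ∈ I \ J.erase x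
      have : (I \ J.erase x).Nonempty := by
        rw [← Finset.card_pos, Finset.card_sdiff_of_subset hKI, hKcard]; omega
      obtain ⟨y, hy⟩ := this
      obtain ⟨hyI, hyK⟩ := Finset.mem_sdiff.1 hy
      have hKe : J.erase x = I.erase y := by
        apply Finset.eq_of_subset_of_card_le
        · intro z hz
          exact Finset.mem_erase.2 ⟨fun h => hyK (h ▸ hz), hKI hz⟩
        · rw [Finset.card_erase_of_mem hyI, hKcard]
      have hJeq : J = insert x (I.erase y) := by
        rw [← hKe, Finset.insert_erase hxJ]
      have hyI' : y ∈ I' := Finset.mem_filter.2 ⟨hyI, hJeq ▸ hJ⟩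
      have hyJ : y ∈ J := hAJ (Finset.mem_insert_of_mem hyI')
      have hyx : y ≠ x := fun h => hxI (h ▸ hyI)
      exact hyK (Finset.mem_erase.2 ⟨hyx, hyJ⟩)
  · intro y hy
    obtain ⟨hyI, hind⟩ := Finset.mem_filter.1 hy
    have hsub : insert x (I.erase y) ⊆ U :=
      Finset.insert_subset hxU ((Finset.erase_subset _ _).trans hIU)
    have h := hIweight _ hsub hind
    have hxe : x ∉ I.erase y := fun h' => hxI (Finset.mem_of_mem_erase h')
    rw [Finset.sum_insert hxe, ← Finset.add_sum_erase _ w hyI] at h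
    exact le_of_add_le_add_right h
end

section
/- Let V be partitioned into color classes V₁, …, V_C, let a matroid be given on V, let ℓ_c ≤ u_c be fairness bounds, and let w : V → ℝ≥0 be a weight function defining the modular objective f(S) = Σ_{y ∈ S} w(y). For each color c, let I_c ⊆ V_c be an inclusion-maximal independent subset of V_c with the property that for every x ∈ V_c \ I_c there exists a subset I'_c ⊆ I_c such that I'_c ∪ {x} is not independent and w(y) ≥ w(x) for every y ∈ I'_c. If the family 𝓕 of feasible sets is nonempty, then there exists a feasible set R ⊆ ⋃_c I_c with f(R) = max{ f(S) : S ∈ 𝓕 }. -/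
open Classical in
/-- Matroid exchange: if `insert x A` is independent, `I'` independent, and
`insert x I'` dependent, then some `y ∈ I' \ A` can replace `x`. -/
lemma FinMatroid.exchange {V : Type*} [DecidableEq V] (M : FinMatroid V)
    {A I' : Finset V} {x : V} (hA : M.Indep (insert x A)) (hxA : x ∉ A)
    (hI' : M.Indep I') (hdep : ¬ M.Indep (insert x I')) :
    ∃ y ∈ I', y ∉ A ∧ M.Indep (insert y A) := by
  by_contra hcon
  push_neg at hcon
  -- J : max-card independent subset of A ∪ I' containing I'
  set T := A ∪ I' with hT
  set F := T.powerset.filter (fun J => M.Indep J ∧ I' ⊆ J) with hF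
  have hne : F.Nonempty := ⟨I', Finset.mem_filter.mpr ⟨Finset.mem_powerset.mpr Finset.subset_union_right, hI', Finset.Subset.refl _⟩⟩
  obtain ⟨J, hJF, hJmax⟩ := Finset.exists_max_image F Finset.card hne
  simp only [hF, Finset.mem_filter, Finset.mem_powerset] at hJF
  obtain ⟨hJT, hJindep, hI'J⟩ := hJF
  have hAindep : M.Indep A := M.subset_indep (Finset.subset_insert _ _) hA
  -- |J| ≤ |A|
  have hJA : J.card ≤ A.card := by
    by_contra h
    push_neg at h
    obtain ⟨e, heJ, heA, hei⟩ := M.augment hAindep hJindep h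
    have heI' : e ∈ I' := by
      rcases Finset.mem_union.mp (hJT heJ) with h' | h'
      · exact absurd h' heA
      · exact h'
    exact (hcon e heI') heA hei
  have hcard : J.card < (insert x A).card := by
    rw [Finset.card_insert_of_notMem hxA]; omega
  obtain ⟨e, heS, heJ, hei⟩ := M.augment hJindep hA hcard
  rcases Finset.mem_insert.mp heS with rfl | heA
  · exact hdep (M.subset_indep (Finset.insert_subset_insert _ hI'J) hei)
  · have hmem : insert e J ∈ F := by
      simp only [hF, Finset.mem_filter, Finset.mem_powerset]
      refine ⟨Finset.insert_subset (Finset.mem_union_left _ heA) hJT, hei,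
        hI'J.trans (Finset.subset_insert _ _)⟩
    have := hJmax _ hmem
    rw [Finset.card_insert_of_notMem heJ] at this
    omega

lemma filter_card_swap {V : Type*} [DecidableEq V] (S : Finset V) (x y : V)
    (hx : x ∈ S) (hy : y ∉ S) (p : V → Prop) [DecidablePred p] (hpy : p y ↔ p x) :
    ((insert y (S.erase x)).filter p).card = (S.filter p).card := by
  rw [Finset.filter_insert, Finset.filter_erase]
  by_cases h : p y
  · rw [if_pos h]
    have hxf : x ∈ S.filter p := Finset.mem_filter.mpr ⟨hx, hpy.mp h⟩
    have hyf : y ∉ (S.filter p).erase x := fun hyy =>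
      hy (Finset.mem_filter.mp (Finset.mem_of_mem_erase hyy)).1
    rw [Finset.card_insert_of_notMem hyf, Finset.card_erase_of_mem hxf]
    have := Finset.card_pos.mpr ⟨x, hxf⟩
    omega
  · rw [if_neg h]
    rw [Finset.erase_eq_of_notMem (fun hxx => h (hpy.mpr (Finset.mem_filter.mp hxx).2))]


open Classical in
/-- If each `I c` is an inclusion-maximal independent subset of color class `V_c` such that
every `x ∈ V_c \ I c` admits a subset `I' ⊆ I c` with `I' ∪ {x}` dependent and
`w y ≥ w x` for all `y ∈ I'`, and the family of feasible sets is nonempty, then `⋃ c, I c`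
contains a feasible set `R` of maximum modular objective value `f(R) = Σ_{y ∈ R} w y`
among all feasible sets. -/
theorem optimal_feasible_in_greedy_reservoir {V : Type*} [DecidableEq V] [Fintype V]
    {C : ℕ} (M : FinMatroid V) (color : V → Fin C) (ℓ u : Fin C → ℕ)
    (hlu : ∀ c, ℓ c ≤ u c)
    (w : V → NNReal)
    (I : Fin C → Finset V)
    (hIcol : ∀ c, ∀ x ∈ I c, color x = c)
    (hIindep : ∀ c, M.Indep (I c))
    (hImax : ∀ c, ∀ J : Finset V, M.Indep J → (∀ x ∈ J, color x = c) → I c ⊆ J → J = I c)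
    (hIswap : ∀ c, ∀ x : V, color x = c → x ∉ I c →
      ∃ I' ⊆ I c, ¬ M.Indep (insert x I') ∧ ∀ y ∈ I', w x ≤ w y)
    (hfeas : ∃ S : Finset V, Feasible M color ℓ u S) :
    ∃ R : Finset V, Feasible M color ℓ u R ∧ R ⊆ Finset.univ.biUnion I ∧
      ∀ S : Finset V, Feasible M color ℓ u S → ∑ y ∈ S, w y ≤ ∑ y ∈ R, w y := by
  set Feas : Finset V → Prop := Feasible M color ℓ u with hFeas
  set U := Finset.univ.biUnion I with hU
  -- step: from a maximizer with an element outside U, get a maximizer with fewer outside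
  have key : ∀ n : ℕ, ∀ S : Finset V, Feas S → (∀ T, Feas T → ∑ y ∈ T, w y ≤ ∑ y ∈ S, w y) →
      (S \ U).card ≤ n →
      ∃ R, Feas R ∧ R ⊆ U ∧ ∀ T, Feas T → ∑ y ∈ T, w y ≤ ∑ y ∈ R, w y := by
    intro n
    induction n with
    | zero =>
      intro S hS hSmax hcard
      refine ⟨S, hS, ?_, hSmax⟩
      have : S \ U = ∅ := Finset.card_eq_zero.mp (Nat.le_zero.mp hcard)
      intro z hz
      by_contra hzU
      exact absurd (Finset.mem_sdiff.mpr ⟨hz, hzU⟩) (by simp [this])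
    | succ n ih =>
      intro S hS hSmax hcard
      by_cases hsub : S ⊆ U
      · exact ⟨S, hS, hsub, hSmax⟩
      · obtain ⟨x, hxS, hxU⟩ := Finset.not_subset.mp hsub
        set c := color x with hc
        have hxI : x ∉ I c := fun h => hxU (Finset.mem_biUnion.mpr ⟨c, Finset.mem_univ _, h⟩)
        obtain ⟨I', hI'sub, hdep, hwge⟩ := hIswap c x rfl hxI
        have hI'indep : M.Indep I' := M.subset_indep hI'sub (hIindep c)
        have hins : M.Indep (insert x (S.erase x)) := by
          rw [Finset.insert_erase hxS]; exact hS.1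
        obtain ⟨y, hyI', hyA, hyindep⟩ :=
          M.exchange hins (Finset.notMem_erase _ _) hI'indep hdep
        have hyIc : y ∈ I c := hI'sub hyI'
        have hycol : color y = c := hIcol c y hyIc
        have hyx : y ≠ x := fun h => hxI (h ▸ hyIc)
        have hyS : y ∉ S := fun h => hyA (Finset.mem_erase.mpr ⟨hyx, h⟩)
        set S' := insert y (S.erase x) with hS'
        have hwxy : w x ≤ w y := hwge y hyI'
        -- weight
        have hsumS : ∑ z ∈ S, w z = w x + ∑ z ∈ S.erase x, w z :=
          (Finset.add_sum_erase _ _ hxS).symm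
        have hsumS' : ∑ z ∈ S', w z = w y + ∑ z ∈ S.erase x, w z :=
          Finset.sum_insert hyA
        have hwle : ∑ z ∈ S, w z ≤ ∑ z ∈ S', w z := by
          rw [hsumS, hsumS']; exact add_le_add_left hwxy _
        -- feasibility
        have hS'feas : Feas S' := by
          refine ⟨hyindep, fun c' => ?_⟩
          have := filter_card_swap S x y hxS hyS (fun z => color z = c')
            (by show color y = c' ↔ color x = c'; rw [hycol, hc])
          rw [this]
          exact hS.2 c'
        have hS'max : ∀ T, Feas T → ∑ z ∈ T, w z ≤ ∑ z ∈ S', w z :=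
          fun T hT => (hSmax T hT).trans hwle
        have hyU : y ∈ U := Finset.mem_biUnion.mpr ⟨c, Finset.mem_univ _, hyIc⟩
        have hsub' : S' \ U ⊆ (S \ U).erase x := by
          intro z hz
          obtain ⟨hz1, hz2⟩ := Finset.mem_sdiff.mp hz
          rcases Finset.mem_insert.mp hz1 with rfl | hz3
          · exact absurd hyU hz2
          · obtain ⟨hzx, hzS⟩ := Finset.mem_erase.mp hz3
            exact Finset.mem_erase.mpr ⟨hzx, Finset.mem_sdiff.mpr ⟨hzS, hz2⟩⟩
        have hcard' : (S' \ U).card ≤ n := by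
          have h1 := Finset.card_le_card hsub'
          have h2 : ((S \ U).erase x).card = (S \ U).card - 1 :=
            Finset.card_erase_of_mem (Finset.mem_sdiff.mpr ⟨hxS, hxU⟩)
          have h3 : 1 ≤ (S \ U).card :=
            Finset.card_pos.mpr ⟨x, Finset.mem_sdiff.mpr ⟨hxS, hxU⟩⟩
          omega
        exact ih S' hS'feas hS'max hcard'
  -- existence of a maximizer
  obtain ⟨S₀, hS₀⟩ := hfeas
  set F := Finset.univ.powerset.filter Feas with hF
  have hne : F.Nonempty := ⟨S₀, Finset.mem_filter.mpr ⟨Finset.mem_powerset.mpr (Finset.subset_univ _), hS₀⟩⟩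
  obtain ⟨S, hSF, hSmax⟩ := Finset.exists_max_image F (fun T => ∑ y ∈ T, w y) hne
  have hSfeas : Feas S := (Finset.mem_filter.mp hSF).2
  exact key (S \ U).card S hSfeas
    (fun T hT => hSmax T (Finset.mem_filter.mpr ⟨Finset.mem_powerset.mpr (Finset.subset_univ _), hT⟩))
    le_rfl
end

section
/- Let G be a bipartite graph with parts P and Q and edge set E ⊆ P × Q, containing a matching of size m. Let P⁺ and Q⁺ be new finite vertex sets disjoint from P ∪ Q with |Q⁺| = |P| + |P⁺| − |Q| (in particular |P| + |P⁺| ≥ |Q|) and |P⁺| ≥ |Q| − m. Form the augmented bipartite graph on parts P ∪ P⁺ and Q ∪ Q⁺ with edge set E ∪ (P⁺ × Q) ∪ (P × Q⁺) ∪ (P⁺ × Q⁺). Then the augmented graph contains a perfect matching, i.e., a matching covering every vertex of (P ∪ P⁺) ∪ (Q ∪ Q⁺). -/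
/-- A perfect matching: a matching covering every left vertex and every right vertex. -/
def IsPerfectMatching {α β : Type*} (M : Finset (α × β)) : Prop :=
  IsMatching M ∧ (∀ a : α, ∃ e ∈ M, e.1 = a) ∧ (∀ b : β, ∃ e ∈ M, e.2 = b)

/-- If a bipartite graph on parts `P`, `Q` with edges `E` has a matching of size `m`, and new
vertex sets `P⁺`, `Q⁺` satisfy `|Q⁺| = |P| + |P⁺| − |Q|` and `|P⁺| ≥ |Q| − m`, then the
graph augmented with all edges of `P⁺ × Q`, `P × Q⁺` and `P⁺ × Q⁺` has a perfect matching. -/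
theorem augmented_graph_has_perfect_matching
    {P Q Pp Qp : Type*} [Fintype P] [Fintype Q] [Fintype Pp] [Fintype Qp]
    [DecidableEq P] [DecidableEq Q] [DecidableEq Pp] [DecidableEq Qp]
    (E : Finset (P × Q)) (m : ℕ)
    (hm : ∃ M₀ ⊆ E, IsMatching M₀ ∧ M₀.card = m)
    (hQp : Fintype.card Qp + Fintype.card Q = Fintype.card P + Fintype.card Pp)
    (hPp : Fintype.card Q ≤ Fintype.card Pp + m) :
    ∃ M : Finset ((P ⊕ Pp) × (Q ⊕ Qp)),
      (∀ p : P, ∀ q : Q, (Sum.inl p, Sum.inl q) ∈ M → (p, q) ∈ E) ∧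
      IsPerfectMatching M := by
  classical
  obtain ⟨M₀, hM₀E, ⟨h1, h2⟩, hcard⟩ := hm
  set Pm : Finset P := M₀.image Prod.fst with hPmdef
  set Qm : Finset Q := M₀.image Prod.snd with hQmdef
  have hPmcard : Pm.card = m := by
    rw [hPmdef, Finset.card_image_of_injOn, hcard]
    exact fun e he e' he' h => h1 e he e' he' h
  have hQmcard : Qm.card = m := by
    rw [hQmdef, Finset.card_image_of_injOn, hcard]
    exact fun e he e' he' h => h2 e he e' he' h
  -- the partner function on matched P-vertices
  have hpart : ∀ p ∈ Pm, ∃ q, (p, q) ∈ M₀ := by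
    intro p hp
    rw [hPmdef, Finset.mem_image] at hp
    obtain ⟨e, he, rfl⟩ := hp
    exact ⟨e.2, he⟩
  let f : {p // p ∈ Pm} → {q // q ∈ Qm} := fun p =>
    ⟨(hpart p.1 p.2).choose, by
      rw [hQmdef, Finset.mem_image]
      exact ⟨(p.1, (hpart p.1 p.2).choose), (hpart p.1 p.2).choose_spec, rfl⟩⟩
  have hf : ∀ p : {p // p ∈ Pm}, (p.1, (f p).1) ∈ M₀ := fun p => (hpart p.1 p.2).choose_spec
  have finj : Function.Injective f := by
    intro p p' h
    have h' : (p.1, (f p).1) = (p'.1, (f p').1) :=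
      h2 _ (hf p) _ (hf p') (by rw [h])
    exact Subtype.ext (congrArg Prod.fst h')
  have fsurj : Function.Surjective f := by
    rintro ⟨q, hq⟩
    rw [hQmdef, Finset.mem_image] at hq
    obtain ⟨e, he, rfl⟩ := hq
    have hp : e.1 ∈ Pm := by
      rw [hPmdef, Finset.mem_image]; exact ⟨e, he, rfl⟩
    refine ⟨⟨e.1, hp⟩, ?_⟩
    have h' : (e.1, (f ⟨e.1, hp⟩).1) = e :=
      h1 _ (hf ⟨e.1, hp⟩) _ he rfl
    exact Subtype.ext (congrArg Prod.snd h')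
  -- the embedding of unmatched Q-vertices into Pp
  have hcardQc : Fintype.card {q // q ∈ Qmᶜ} ≤ Fintype.card Pp := by
    have : Fintype.card {q // q ∈ Qmᶜ} = Qmᶜ.card := Fintype.card_coe _
    rw [this, Finset.card_compl, hQmcard]
    omega
  obtain ⟨j⟩ := Function.Embedding.nonempty_of_card_le hcardQc
  have hmleP : m ≤ Fintype.card P := by
    rw [← hPmcard]; exact Finset.card_le_univ Pm
  have hmleQ : m ≤ Fintype.card Q := by
    rw [← hQmcard]; exact Finset.card_le_univ Qm
  -- the filler bijection onto Qp
  have hcardPm : Fintype.card {p // p ∈ Pm} = m := by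
    rw [Fintype.card_coe, hPmcard]
  have hcardrange : Fintype.card (Set.range ⇑j) = Fintype.card Q - m := by
    rw [← Fintype.card_congr (Equiv.ofInjective ⇑j j.injective), Fintype.card_coe,
      Finset.card_compl, hQmcard]
  have hωcard : Fintype.card ({p // p ∉ Pm} ⊕ {x : Pp // x ∉ Set.range ⇑j})
      = Fintype.card Qp := by
    rw [Fintype.card_sum]
    have e1 : Fintype.card {p // p ∉ Pm} = Fintype.card P - m := by
      rw [Fintype.card_subtype_compl, hcardPm]
    have e2 : Fintype.card {x : Pp // x ∉ Set.range ⇑j} =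
        Fintype.card Pp - (Fintype.card Q - m) := by
      rw [Fintype.card_subtype_compl]
      congr 1
    rw [e1, e2]
    omega
  let ω : ({p // p ∉ Pm} ⊕ {x : Pp // x ∉ Set.range ⇑j}) ≃ Qp := Fintype.equivOfCardEq hωcard
  -- the global map
  let F : (P ⊕ Pp) → (Q ⊕ Qp) := fun x =>
    match x with
    | .inl p => if h : p ∈ Pm then .inl (f ⟨p, h⟩).1 else .inr (ω (.inl ⟨p, h⟩))
    | .inr x => if h : x ∈ Set.range ⇑j then .inl h.choose.1 else .inr (ω (.inr ⟨x, h⟩))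
  have hchoose : ∀ {x : Pp} (h : x ∈ Set.range ⇑j), j h.choose = x := fun h => h.choose_spec
  have FP_pos : ∀ (p : P) (h : p ∈ Pm), F (.inl p) = .inl (f ⟨p, h⟩).1 := fun p h => dif_pos h
  have FP_neg : ∀ (p : P) (h : p ∉ Pm), F (.inl p) = .inr (ω (.inl ⟨p, h⟩)) := fun p h => dif_neg h
  have FQ_pos : ∀ (x : Pp) (h : x ∈ Set.range ⇑j), F (.inr x) = .inl h.choose.1 :=
    fun x h => dif_pos h
  have FQ_neg : ∀ (x : Pp) (h : x ∉ Set.range ⇑j), F (.inr x) = .inr (ω (.inr ⟨x, h⟩)) :=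
    fun x h => dif_neg h
  have hFinj : Function.Injective F := by
    rintro (p | x) (p' | x') hab
    · by_cases h : p ∈ Pm <;> by_cases h' : p' ∈ Pm
      · rw [FP_pos p h, FP_pos p' h'] at hab
        have := finj (Subtype.ext (Sum.inl.inj hab))
        exact congrArg Sum.inl (congrArg Subtype.val this)
      · rw [FP_pos p h, FP_neg p' h'] at hab; exact (Sum.inl_ne_inr hab).elim
      · rw [FP_neg p h, FP_pos p' h'] at hab; exact (Sum.inr_ne_inl hab).elim
      · rw [FP_neg p h, FP_neg p' h'] at hab
        have := ω.injective (Sum.inr.inj hab)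
        exact congrArg Sum.inl (congrArg Subtype.val (Sum.inl.inj this))
    · by_cases h : p ∈ Pm <;> by_cases h' : x' ∈ Set.range ⇑j
      · rw [FP_pos p h, FQ_pos x' h'] at hab
        have heq : (f ⟨p, h⟩).1 = (h'.choose : {q // q ∈ Qmᶜ}).1 := Sum.inl.inj hab
        exact absurd (heq ▸ (f ⟨p, h⟩).2) (Finset.mem_compl.mp h'.choose.2)
      · rw [FP_pos p h, FQ_neg x' h'] at hab; exact (Sum.inl_ne_inr hab).elim
      · rw [FP_neg p h, FQ_pos x' h'] at hab; exact (Sum.inr_ne_inl hab).elim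
      · rw [FP_neg p h, FQ_neg x' h'] at hab
        exact (Sum.inl_ne_inr (ω.injective (Sum.inr.inj hab))).elim
    · by_cases h : x ∈ Set.range ⇑j <;> by_cases h' : p' ∈ Pm
      · rw [FQ_pos x h, FP_pos p' h'] at hab
        have heq : (f ⟨p', h'⟩).1 = (h.choose : {q // q ∈ Qmᶜ}).1 := (Sum.inl.inj hab).symm
        exact absurd (heq ▸ (f ⟨p', h'⟩).2) (Finset.mem_compl.mp h.choose.2)
      · rw [FQ_pos x h, FP_neg p' h'] at hab; exact (Sum.inl_ne_inr hab).elim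
      · rw [FQ_neg x h, FP_pos p' h'] at hab; exact (Sum.inr_ne_inl hab).elim
      · rw [FQ_neg x h, FP_neg p' h'] at hab
        exact (Sum.inr_ne_inl (ω.injective (Sum.inr.inj hab))).elim
    · by_cases h : x ∈ Set.range ⇑j <;> by_cases h' : x' ∈ Set.range ⇑j
      · rw [FQ_pos x h, FQ_pos x' h'] at hab
        have hq : h.choose = h'.choose := Subtype.ext (Sum.inl.inj hab)
        have hx := hchoose h
        rw [hq, hchoose h'] at hx
        exact congrArg Sum.inr hx.symm
      · rw [FQ_pos x h, FQ_neg x' h'] at hab; exact (Sum.inl_ne_inr hab).elim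
      · rw [FQ_neg x h, FQ_pos x' h'] at hab; exact (Sum.inr_ne_inl hab).elim
      · rw [FQ_neg x h, FQ_neg x' h'] at hab
        have := ω.injective (Sum.inr.inj hab)
        exact congrArg Sum.inr (congrArg Subtype.val (Sum.inr.inj this))
  have hFbij : Function.Bijective F := by
    refine (Fintype.bijective_iff_injective_and_card F).mpr ⟨hFinj, ?_⟩
    simp only [Fintype.card_sum]
    omega
  refine ⟨Finset.univ.image (fun x => (x, F x)), ?_, ⟨?_, ?_⟩, ?_, ?_⟩
  · intro p q hmem
    rw [Finset.mem_image] at hmem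
    obtain ⟨x, -, hx⟩ := hmem
    have hx1 : x = Sum.inl p := congrArg Prod.fst hx
    have hx2 : F (Sum.inl p) = Sum.inl q := by
      rw [← hx1]; exact congrArg Prod.snd hx
    by_cases h : p ∈ Pm
    · rw [FP_pos p h] at hx2
      have hq : (f ⟨p, h⟩).1 = q := Sum.inl.inj hx2
      rw [← hq]
      exact hM₀E (hf ⟨p, h⟩)
    · rw [FP_neg p h] at hx2
      exact (Sum.inr_ne_inl hx2).elim
  · intro e he e' he' hfst
    rw [Finset.mem_image] at he he'
    obtain ⟨x, -, rfl⟩ := he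
    obtain ⟨y, -, rfl⟩ := he'
    simp only at hfst
    rw [hfst]
  · intro e he e' he' hsnd
    rw [Finset.mem_image] at he he'
    obtain ⟨x, -, rfl⟩ := he
    obtain ⟨y, -, rfl⟩ := he'
    simp only at hsnd
    rw [hFinj hsnd]
  · intro a
    exact ⟨(a, F a), Finset.mem_image_of_mem _ (Finset.mem_univ a), rfl⟩
  · intro b
    obtain ⟨a, ha⟩ := hFbij.2 b
    exact ⟨(a, F a), Finset.mem_image_of_mem _ (Finset.mem_univ a), ha⟩
end
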